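/- arXiv:2009.01757 — 7 statements merged into one kernel-verified Lean document; each statement's English description precedes it below -/
import Mathlib

section
/- Let A be an invertible n×n real matrix with rows a₁,…,aₙ, and for k ∈ ℕ let E[R^k x] denote the expectation of the k-fold composition of independent random reflections applied to x, i.e. E[R^k x] = Σ over all (i₁,…,i_k) ∈ {1,…,n}^k of (∏_{j=1}^{k} ‖a_{i_j}‖²/‖A‖_F²)·(R_{i_k}∘⋯∘R_{i_1})(x). Then E[R^k x] = (Id − (2/‖A‖_F²)·AᵀA)^k · x for every x ∈ ℝⁿ. -/
open scoped RealInnerProductSpace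
open Finset

/-- The `i`-th row of the matrix `A`, viewed as a vector in Euclidean space. -/
noncomputable def row {n : ℕ} (A : Matrix (Fin n) (Fin n) ℝ) (i : Fin n) :
    EuclideanSpace ℝ (Fin n) := (WithLp.equiv 2 (Fin n → ℝ)).symm (A i)

/-- View a plain vector as an element of Euclidean space. -/
noncomputable def toE {n : ℕ} (v : Fin n → ℝ) : EuclideanSpace ℝ (Fin n) :=
  (WithLp.equiv 2 (Fin n → ℝ)).symm v

/-- View an element of Euclidean space as a plain vector. -/
noncomputable def ofE {n : ℕ} (v : EuclideanSpace ℝ (Fin n)) : Fin n → ℝ :=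
  WithLp.equiv 2 (Fin n → ℝ) v

/-- The squared Frobenius norm `‖A‖_F²` of a matrix. -/
def frobSq {n : ℕ} (A : Matrix (Fin n) (Fin n) ℝ) : ℝ := ∑ i, ∑ j, (A i j) ^ 2

/-- The ℓ² operator norm of a matrix. -/
noncomputable def opNorm {n : ℕ} (A : Matrix (Fin n) (Fin n) ℝ) : ℝ :=
  ‖Matrix.toEuclideanCLM (𝕜 := ℝ) A‖

/-- The reflection `R_i x = x − 2·(⟨x, a_i⟩/‖a_i‖²)·a_i` through the hyperplane
`{y : ⟨a_i, y⟩ = 0}`, where `a_i` is the `i`-th row of `A`. -/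
noncomputable def reflRow {n : ℕ} (A : Matrix (Fin n) (Fin n) ℝ) (i : Fin n)
    (x : EuclideanSpace ℝ (Fin n)) : EuclideanSpace ℝ (Fin n) :=
  x - (2 * (⟪x, row A i⟫ / ‖row A i‖ ^ 2)) • row A i

/-- `applySeq A k is x = (R_{i_k} ∘ ⋯ ∘ R_{i_1}) x` for the index sequence `is`. -/
noncomputable def applySeq {n : ℕ} (A : Matrix (Fin n) (Fin n) ℝ) :
    (k : ℕ) → (Fin k → Fin n) → EuclideanSpace ℝ (Fin n) → EuclideanSpace ℝ (Fin n)
  | 0, _, x => x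
  | k + 1, is, x => reflRow A (is (Fin.last k)) (applySeq A k (fun j => is j.castSucc) x)

noncomputable def matL {n : ℕ} (M : Matrix (Fin n) (Fin n) ℝ) :
    EuclideanSpace ℝ (Fin n) →ₗ[ℝ] EuclideanSpace ℝ (Fin n) :=
  (WithLp.linearEquiv 2 ℝ (Fin n → ℝ)).symm.toLinearMap ∘ₗ M.mulVecLin ∘ₗ
    (WithLp.linearEquiv 2 ℝ (Fin n → ℝ)).toLinearMap

lemma matL_apply {n : ℕ} (M : Matrix (Fin n) (Fin n) ℝ) (v : EuclideanSpace ℝ (Fin n)) :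
    matL M v = toE (M.mulVec (ofE v)) := rfl

lemma norm_row_sq {n : ℕ} (A : Matrix (Fin n) (Fin n) ℝ) (i : Fin n) :
    ‖row A i‖ ^ 2 = ∑ j, (A i j) ^ 2 := by
  rw [← real_inner_self_eq_norm_sq]
  rw [PiLp.inner_apply]; simp [row, sq]

lemma frobSq_eq {n : ℕ} (A : Matrix (Fin n) (Fin n) ℝ) :
    frobSq A = ∑ i, ‖row A i‖ ^ 2 := by
  simp [frobSq, norm_row_sq]

lemma inner_x_row {n : ℕ} (A : Matrix (Fin n) (Fin n) ℝ) (i : Fin n)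
    (x : EuclideanSpace ℝ (Fin n)) : ⟪x, row A i⟫ = ∑ j, x j * A i j := by
  simp [row, PiLp.inner_apply, mul_comm]

lemma key_sum {n : ℕ} (A : Matrix (Fin n) (Fin n) ℝ) (x : EuclideanSpace ℝ (Fin n)) :
    ∑ i, ⟪x, row A i⟫ • row A i = toE ((A.transpose * A).mulVec (ofE x)) := by
  apply (WithLp.linearEquiv 2 ℝ (Fin n → ℝ)).injective
  rw [map_sum]
  simp only [map_smul]
  have hr : ∀ i, (WithLp.linearEquiv 2 ℝ (Fin n → ℝ)) (row A i) = A i := fun _ => rfl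
  have ht : ∀ v : Fin n → ℝ, (WithLp.linearEquiv 2 ℝ (Fin n → ℝ)) (toE v) = v := fun _ => rfl
  rw [ht]
  funext j
  simp only [Finset.sum_apply, Pi.smul_apply, smul_eq_mul, hr,
    Matrix.mulVec, dotProduct, Matrix.mul_apply, Matrix.transpose_apply, inner_x_row]
  simp only [Finset.sum_mul, ofE, row, WithLp.equiv_apply, WithLp.equiv_symm_apply, PiLp.toLp_apply]
  rw [Finset.sum_comm]
  refine Finset.sum_congr rfl fun l _ => Finset.sum_congr rfl fun i _ => by ring

lemma step {n : ℕ} (A : Matrix (Fin n) (Fin n) ℝ) (hF : frobSq A ≠ 0)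
    (hrow : ∀ i, row A i ≠ 0) (x : EuclideanSpace ℝ (Fin n)) :
    ∑ i, (‖row A i‖ ^ 2 / frobSq A) • reflRow A i x
      = toE (((1 : Matrix (Fin n) (Fin n) ℝ) - (2 / frobSq A) • (A.transpose * A)).mulVec
          (ofE x)) := by
  have h1 : ∀ i : Fin n, (‖row A i‖ ^ 2 / frobSq A) • reflRow A i x
      = (‖row A i‖ ^ 2 / frobSq A) • x - (2 / frobSq A) • (⟪x, row A i⟫ • row A i) := by
    intro i
    have hni : ‖row A i‖ ^ 2 ≠ 0 := pow_ne_zero _ (norm_ne_zero_iff.mpr (hrow i))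
    set s := ‖row A i‖ ^ 2 with hs
    rw [reflRow, smul_sub, smul_smul, smul_smul]
    congr 2
    rw [hs]
    have := norm_ne_zero_iff.mpr (hrow i)
    field_simp
  rw [Finset.sum_congr rfl fun i _ => h1 i, Finset.sum_sub_distrib, ← Finset.sum_smul,
    ← Finset.smul_sum, ← Finset.sum_div, ← frobSq_eq, div_self hF, one_smul, key_sum,
    Matrix.sub_mulVec, Matrix.smul_mulVec, Matrix.one_mulVec]
  simp only [toE, ofE, WithLp.equiv_symm_apply, WithLp.equiv_apply, WithLp.toLp_sub, WithLp.toLp_smul,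
    WithLp.toLp_ofLp]

/-- The expectation of `k` independent random reflections applied to `x` equals
`(Id − (2/‖A‖_F²)·AᵀA)^k · x`. -/
theorem expected_iterated_reflection_eq_matrix_pow {n : ℕ} (A : Matrix (Fin n) (Fin n) ℝ)
    (hA : IsUnit A) (k : ℕ) (x : EuclideanSpace ℝ (Fin n)) :
    ∑ is : Fin k → Fin n, (∏ j, ‖row A (is j)‖ ^ 2 / frobSq A) • applySeq A k is x
      = toE (((((1 : Matrix (Fin n) (Fin n) ℝ) - (2 / frobSq A) • (A.transpose * A))) ^ k).mulVec
          (ofE x)) := by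
  by_cases hn : n = 0
  · subst hn
    haveI : Subsingleton (EuclideanSpace ℝ (Fin 0)) :=
      ⟨fun a b => PiLp.ext fun i => Fin.elim0 i⟩
    exact Subsingleton.elim _ _
  have hnpos : 0 < n := Nat.pos_of_ne_zero hn
  have hdet : A.det ≠ 0 := by
    have := (Matrix.isUnit_iff_isUnit_det A).mp hA
    exact isUnit_iff_ne_zero.mp this
  have hrow : ∀ i, row A i ≠ 0 := by
    intro i h
    have hAi : A i = 0 := by
      have := congrArg (WithLp.equiv 2 (Fin n → ℝ)) h
      simpa [row] using this
    exact hdet (Matrix.det_eq_zero_of_row_eq_zero i (fun j => by simp [hAi]))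
  have hF : frobSq A ≠ 0 := by
    rw [frobSq_eq]
    intro h
    set i0 : Fin n := ⟨0, hnpos⟩
    have h0 : ‖row A i0‖ ^ 2 = 0 :=
      (Finset.sum_eq_zero_iff_of_nonneg (fun i _ => by positivity)).mp h i0 (Finset.mem_univ _)
    exact hrow i0 (norm_eq_zero.mp (by nlinarith [norm_nonneg (row A i0)]))
  set B : Matrix (Fin n) (Fin n) ℝ := 1 - (2 / frobSq A) • (A.transpose * A) with hB
  induction k with
  | zero =>
      simp [applySeq, Matrix.one_mulVec, toE, ofE]
  | succ k ih =>
      rw [← Equiv.sum_comp (Fin.snocEquiv (fun _ => Fin n))]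
      rw [Fintype.sum_prod_type]
      have hterm : ∀ (i : Fin n) (is' : Fin k → Fin n),
          (∏ j, ‖row A ((Fin.snocEquiv (fun _ => Fin n) (i, is')) j)‖ ^ 2 / frobSq A) •
            applySeq A (k + 1) (Fin.snocEquiv (fun _ => Fin n) (i, is')) x
          = (∏ j, ‖row A (is' j)‖ ^ 2 / frobSq A) •
              ((‖row A i‖ ^ 2 / frobSq A) • reflRow A i (applySeq A k is' x)) := by
        intro i is'
        have hsnoc : (Fin.snocEquiv (fun _ => Fin n) (i, is')) = Fin.snoc is' i := rfl
        rw [hsnoc, Fin.prod_univ_castSucc]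
        simp only [Fin.snoc_castSucc, Fin.snoc_last, applySeq, smul_smul]
      simp only [hterm]
      rw [Finset.sum_comm]
      have hinner : ∀ is' : Fin k → Fin n,
          ∑ i, (∏ j, ‖row A (is' j)‖ ^ 2 / frobSq A) •
              ((‖row A i‖ ^ 2 / frobSq A) • reflRow A i (applySeq A k is' x))
            = (∏ j, ‖row A (is' j)‖ ^ 2 / frobSq A) •
                matL B (applySeq A k is' x) := by
        intro is'
        rw [← Finset.smul_sum, step A hF hrow, matL_apply]
      simp only [hinner]
      have : ∑ is' : Fin k → Fin n, (∏ j, ‖row A (is' j)‖ ^ 2 / frobSq A) •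
          matL B (applySeq A k is' x)
          = matL B (∑ is' : Fin k → Fin n,
              (∏ j, ‖row A (is' j)‖ ^ 2 / frobSq A) • applySeq A k is' x) := by
        rw [map_sum]
        simp only [map_smul]
      rw [this, ih, matL_apply, pow_succ']
      have : ofE (toE ((B ^ k).mulVec (ofE x))) = (B ^ k).mulVec (ofE x) := rfl
      rw [this, Matrix.mulVec_mulVec]
end

section
/- Let A be an invertible n×n real matrix with rows a₁,…,aₙ, and let v ∈ ℝⁿ be an eigenvector of AᵀA with eigenvalue σ². Then for every x ∈ ℝⁿ, Σ_{i=1}^{n} (‖a_i‖²/‖A‖_F²)·⟨x − 2·(⟨x, a_i⟩/‖a_i‖²)·a_i, v⟩ = (1 − 2σ²/‖A‖_F²)·⟨x, v⟩. -/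
open scoped RealInnerProductSpace
open Finset

/-- If `v` is an eigenvector of `AᵀA` with eigenvalue `σ²`, then one random reflection
satisfies `E⟨Rx, v⟩ = (1 − 2σ²/‖A‖_F²)·⟨x, v⟩`. -/
theorem expected_inner_singular_vector_one_step {n : ℕ} (A : Matrix (Fin n) (Fin n) ℝ)
    (hA : IsUnit A) (v : EuclideanSpace ℝ (Fin n)) (hv0 : v ≠ 0) (σ : ℝ)
    (hv : (A.transpose * A).mulVec (ofE v) = σ ^ 2 • ofE v)
    (x : EuclideanSpace ℝ (Fin n)) :
    ∑ i, (‖row A i‖ ^ 2 / frobSq A) *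
        ⟪x - (2 * (⟪x, row A i⟫ / ‖row A i‖ ^ 2)) • row A i, v⟫
      = (1 - 2 * σ ^ 2 / frobSq A) * ⟪x, v⟫ := by
  classical
  have hdet : A.det ≠ 0 := by
    intro h
    rw [Matrix.isUnit_iff_isUnit_det, h] at hA
    simp at hA
  have hrow : ∀ i, row A i ≠ 0 := by
    intro i h
    apply hdet
    apply Matrix.det_eq_zero_of_row_eq_zero i
    intro j
    exact congrFun (congrArg (WithLp.equiv 2 (Fin n → ℝ)) h) j
  have hnorm : ∀ i, ‖row A i‖ ^ 2 ≠ 0 := fun i =>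
    pow_ne_zero _ (norm_ne_zero_iff.mpr (hrow i))
  have hne : Nonempty (Fin n) := by
    rcases Nat.eq_zero_or_pos n with h | h
    · exfalso; apply hv0; subst h; ext j; exact j.elim0
    · exact ⟨⟨0, h⟩⟩
  have hFrows : frobSq A = ∑ i, ‖row A i‖ ^ 2 := by
    unfold frobSq
    refine Finset.sum_congr rfl fun i _ => ?_
    rw [← real_inner_self_eq_norm_sq]
    rw [row, PiLp.inner_apply]
    simp [pow_two]
  have hF : frobSq A ≠ 0 := by
    rw [hFrows]
    have : 0 < ∑ i, ‖row A i‖ ^ 2 :=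
      Finset.sum_pos (fun i _ => (hnorm i).lt_of_le' (sq_nonneg _)) Finset.univ_nonempty
    exact this.ne'
  have hrowv : ∀ i, (⟪x, row A i⟫ : ℝ) = ∑ j, x j * A i j := by
    intro i
    simp [row, PiLp.inner_apply, RCLike.inner_apply]
    exact Finset.sum_congr rfl fun _ _ => mul_comm _ _
  have hrowv2 : ∀ i, (⟪row A i, v⟫ : ℝ) = ∑ k, A i k * v k := by
    intro i
    simp [row, PiLp.inner_apply, RCLike.inner_apply]
    exact Finset.sum_congr rfl fun _ _ => mul_comm _ _
  have hvk : ∀ j, ∑ k, (∑ i, A i j * A i k) * v k = σ ^ 2 * v j := by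
    intro j
    have := congrFun hv j
    simpa [Matrix.mulVec, dotProduct, Matrix.mul_apply, Matrix.transpose_apply,
      Finset.sum_mul, ofE] using this
  have key : ∑ i, (⟪x, row A i⟫ : ℝ) * ⟪row A i, v⟫ = σ ^ 2 * ⟪x, v⟫ := by
    have hxv : (⟪x, v⟫ : ℝ) = ∑ j, x j * v j := by
      simp [PiLp.inner_apply, RCLike.inner_apply]
      exact Finset.sum_congr rfl fun _ _ => mul_comm _ _
    simp_rw [hrowv, hrowv2, hxv, Finset.sum_mul, Finset.mul_sum]
    rw [Finset.sum_comm]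
    refine Finset.sum_congr rfl fun j _ => ?_
    rw [Finset.sum_comm]
    calc ∑ k, ∑ i, x j * A i j * (A i k * v k)
        = x j * ∑ k, (∑ i, A i j * A i k) * v k := by
          rw [Finset.mul_sum]
          refine Finset.sum_congr rfl fun k _ => ?_
          rw [Finset.sum_mul, Finset.mul_sum]
          exact Finset.sum_congr rfl fun i _ => by ring
      _ = x j * (σ ^ 2 * v j) := by rw [hvk]
      _ = σ ^ 2 * (x j * v j) := by ring
  have expand : ∀ i, (⟪x - (2 * (⟪x, row A i⟫ / ‖row A i‖ ^ 2)) • row A i, v⟫ : ℝ)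
      = ⟪x, v⟫ - 2 * (⟪x, row A i⟫ / ‖row A i‖ ^ 2) * ⟪row A i, v⟫ := by
    intro i
    rw [inner_sub_left, real_inner_smul_left]
  calc ∑ i, (‖row A i‖ ^ 2 / frobSq A) *
        (⟪x - (2 * (⟪x, row A i⟫ / ‖row A i‖ ^ 2)) • row A i, v⟫ : ℝ)
      = ∑ i, ((‖row A i‖ ^ 2 / frobSq A) * ⟪x, v⟫
          - (2 / frobSq A) * ((⟪x, row A i⟫ : ℝ) * ⟪row A i, v⟫)) := by
        refine Finset.sum_congr rfl fun i _ => ?_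
        have h0 : ‖row A i‖ ≠ 0 := norm_ne_zero_iff.mpr (hrow i)
        rw [expand i]
        field_simp
    _ = (∑ i, ‖row A i‖ ^ 2) / frobSq A * ⟪x, v⟫
          - (2 / frobSq A) * ∑ i, (⟪x, row A i⟫ : ℝ) * ⟪row A i, v⟫ := by
        rw [Finset.sum_sub_distrib, ← Finset.mul_sum, ← Finset.sum_mul, ← Finset.sum_div]
    _ = (1 - 2 * σ ^ 2 / frobSq A) * ⟪x, v⟫ := by
        rw [key, ← hFrows, div_self hF]
        ring
end

section
/- Let A be an invertible n×n real matrix. Then the operator norm of the symmetric matrix Id − (2/‖A‖_F²)·AᵀA satisfies ‖Id − (2/‖A‖_F²)·AᵀA‖ ≤ max{ 1 − 2/(‖A‖_F²·‖A⁻¹‖²), 2‖A‖²/‖A‖_F² − 1 }. -/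
open scoped RealInnerProductSpace
open Finset

lemma cs_aux {E : Type*} [NormedAddCommGroup E] [InnerProductSpace ℝ E]
    (B : E →L[ℝ] E) (hsym : ∀ u v : E, ⟪B u, v⟫ = ⟪u, B v⟫)
    (hpos : ∀ u : E, 0 ≤ ⟪B u, u⟫) (u v : E) :
    ⟪B u, v⟫ ^ 2 ≤ ⟪B u, u⟫ * ⟪B v, v⟫ := by
  have key : ∀ t : ℝ, 0 ≤ ⟪B v, v⟫ * (t * t) + (2 * ⟪B u, v⟫) * t + ⟪B u, u⟫ := by
    intro t
    have h := hpos (u + t • v)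
    have h1 : ⟪B v, u⟫ = ⟪B u, v⟫ := by
      rw [hsym]; exact real_inner_comm _ _
    have expand : ⟪B (u + t • v), u + t • v⟫
        = ⟪B v, v⟫ * (t * t) + (2 * ⟪B u, v⟫) * t + ⟪B u, u⟫ := by
      rw [map_add, map_smul, inner_add_left, inner_add_right, inner_add_right,
        real_inner_smul_left, real_inner_smul_right, real_inner_smul_left,
        real_inner_smul_right, h1]
      ring
    linarith [expand ▸ h]
  have hd := discrim_le_zero key
  rw [discrim] at hd
  nlinarith [hd]

set_option maxHeartbeats 800000 in
lemma op_bound {E : Type*} [NormedAddCommGroup E] [InnerProductSpace ℝ E] [CompleteSpace E]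
    (B : E →L[ℝ] E) (t m Mb : ℝ) (htpos : 0 < t) (hmM : m ≤ Mb)
    (hm : ∀ x : E, m * ‖x‖ ^ 2 ≤ ‖B x‖ ^ 2) (hMb : ∀ x : E, ‖B x‖ ^ 2 ≤ Mb * ‖x‖ ^ 2) :
    ‖(1 : E →L[ℝ] E) - t • (ContinuousLinearMap.adjoint B * B)‖
      ≤ max (1 - t * m) (t * Mb - 1) := by
  set c := max (1 - t * m) (t * Mb - 1) with hc
  have hc1 : 1 - t * m ≤ c := le_max_left _ _
  have hc2 : t * Mb - 1 ≤ c := le_max_right _ _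
  have hc0 : 0 ≤ c := by
    rcases le_total (1 - t * m) (t * Mb - 1) with h | h
    · rw [hc, max_eq_right h]; nlinarith
    · rw [hc, max_eq_left h]; nlinarith
  apply ContinuousLinearMap.opNorm_le_bound _ hc0
  intro x
  set C := ContinuousLinearMap.adjoint B * B with hCdef
  set D := C - m • (1 : E →L[ℝ] E) with hD
  have hCapp : ∀ u, C u = ContinuousLinearMap.adjoint B (B u) := fun u => rfl
  have hCin : ∀ u v : E, ⟪C u, v⟫ = ⟪B u, B v⟫ := by
    intro u v
    rw [hCapp, ContinuousLinearMap.adjoint_inner_left]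
  have hDinner : ∀ u v : E, ⟪D u, v⟫ = ⟪B u, B v⟫ - m * ⟪u, v⟫ := by
    intro u v
    rw [hD]
    simp only [ContinuousLinearMap.sub_apply, ContinuousLinearMap.smul_apply,
      ContinuousLinearMap.one_apply, inner_sub_left, real_inner_smul_left]
    rw [hCin]
  have hsymD : ∀ u v : E, ⟪D u, v⟫ = ⟪u, D v⟫ := by
    intro u v
    have e0 : ⟪u, D v⟫ = ⟪D v, u⟫ := real_inner_comm _ _
    rw [hDinner, e0, hDinner]
    have e1 : ⟪B u, B v⟫ = ⟪B v, B u⟫ := real_inner_comm _ _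
    have e2 : ⟪u, v⟫ = ⟪v, u⟫ := real_inner_comm _ _
    rw [e1, e2]
  have hposD : ∀ u : E, 0 ≤ ⟪D u, u⟫ := by
    intro u
    rw [hDinner, real_inner_self_eq_norm_sq (B u), real_inner_self_eq_norm_sq u]
    linarith [hm u]
  have hubD : ∀ u : E, ⟪D u, u⟫ ≤ (Mb - m) * ‖u‖ ^ 2 := by
    intro u
    rw [hDinner, real_inner_self_eq_norm_sq (B u), real_inner_self_eq_norm_sq u]
    nlinarith [hMb u]
  have hq : ‖D x‖ ^ 2 ≤ (Mb - m) * ⟪D x, x⟫ := by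
    have hcs := cs_aux D hsymD hposD x (D x)
    have h1 : ⟪D x, D x⟫ = ‖D x‖ ^ 2 := real_inner_self_eq_norm_sq _
    have h2 : ⟪D (D x), D x⟫ ≤ (Mb - m) * ‖D x‖ ^ 2 := hubD (D x)
    have h3 : 0 ≤ ⟪D x, x⟫ := hposD x
    by_cases hz : ‖D x‖ ^ 2 = 0
    · rw [hz]
      exact mul_nonneg (by linarith) h3
    · have hzpos : 0 < ‖D x‖ ^ 2 := lt_of_le_of_ne (sq_nonneg _) (Ne.symm hz)
      have h4 : ⟪D x, D x⟫ ^ 2 ≤ ⟪D x, x⟫ * ((Mb - m) * ‖D x‖ ^ 2) :=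
        le_trans hcs (mul_le_mul_of_nonneg_left h2 h3)
      rw [h1] at h4
      nlinarith [h4, hzpos, h3]
  set w := ContinuousLinearMap.adjoint B (B x) with hw
  set s := ‖B x‖ ^ 2 with hs
  have hwx : ⟪w, x⟫ = s := by
    rw [hw, ContinuousLinearMap.adjoint_inner_left, real_inner_self_eq_norm_sq]
  have hxw : ⟪x, w⟫ = s := by rw [real_inner_comm]; exact hwx
  have hDx : D x = w - m • x := by
    rw [hD]
    simp only [ContinuousLinearMap.sub_apply, ContinuousLinearMap.smul_apply,
      ContinuousLinearMap.one_apply]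
    rw [hCapp, ← hw]
  have hnormD : ‖D x‖ ^ 2 = ‖w‖ ^ 2 - 2 * m * s + m ^ 2 * ‖x‖ ^ 2 := by
    rw [hDx, norm_sub_sq_real, real_inner_smul_right, hwx, norm_smul,
      Real.norm_eq_abs, mul_pow, sq_abs]
    ring
  have hDxx : ⟪D x, x⟫ = s - m * ‖x‖ ^ 2 := by
    rw [hDinner, real_inner_self_eq_norm_sq (B x), real_inner_self_eq_norm_sq x, hs]
  have hw2 : ‖w‖ ^ 2 ≤ (m + Mb) * s - m * Mb * ‖x‖ ^ 2 := by
    rw [hnormD, hDxx] at hq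
    nlinarith [hq]
  have hsl : m * ‖x‖ ^ 2 ≤ s := hm x
  have hsu : s ≤ Mb * ‖x‖ ^ 2 := hMb x
  have happ : ((1 : E →L[ℝ] E) - t • C) x = x - t • w := by
    simp only [ContinuousLinearMap.sub_apply, ContinuousLinearMap.smul_apply,
      ContinuousLinearMap.one_apply]
    rw [hCapp, ← hw]
  have hTx : ‖x - t • w‖ ^ 2 = ‖x‖ ^ 2 - 2 * t * s + t ^ 2 * ‖w‖ ^ 2 := by
    rw [norm_sub_sq_real, real_inner_smul_right, hxw, norm_smul,
      Real.norm_eq_abs, mul_pow, sq_abs]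
    ring
  have hkey : ‖x - t • w‖ ^ 2 ≤ (c * ‖x‖) ^ 2 := by
    have hwb : t ^ 2 * ‖w‖ ^ 2 ≤ t ^ 2 * ((m + Mb) * s - m * Mb * ‖x‖ ^ 2) :=
      mul_le_mul_of_nonneg_left hw2 (sq_nonneg t)
    have htmM : t * m ≤ t * Mb := mul_le_mul_of_nonneg_left hmM htpos.le
    rcases le_total (t * (m + Mb)) 2 with hcase | hcase
    · have h1m : 0 ≤ 1 - t * m := by
        have : t * (m + Mb) = t * m + t * Mb := by ring
        linarith
      have hcoef : t * (t * (m + Mb) - 2) ≤ 0 :=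
        mul_nonpos_of_nonneg_of_nonpos htpos.le (by linarith)
      have hmul : (t * (t * (m + Mb) - 2)) * s ≤ (t * (t * (m + Mb) - 2)) * (m * ‖x‖ ^ 2) :=
        mul_le_mul_of_nonpos_left hsl hcoef
      have hsq : (1 - t * m) ^ 2 ≤ c ^ 2 := pow_le_pow_left₀ h1m hc1 2
      have h5 : (1 - t * m) ^ 2 * ‖x‖ ^ 2 ≤ c ^ 2 * ‖x‖ ^ 2 :=
        mul_le_mul_of_nonneg_right hsq (sq_nonneg _)
      have hgoal : (c * ‖x‖) ^ 2 = c ^ 2 * ‖x‖ ^ 2 := by ring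
      rw [hTx, hgoal]
      nlinarith [hwb, hmul, h5]
    · have h2m : 0 ≤ t * Mb - 1 := by
        have : t * (m + Mb) = t * m + t * Mb := by ring
        linarith
      have hcoef : 0 ≤ t * (t * (m + Mb) - 2) :=
        mul_nonneg htpos.le (by linarith)
      have hmul : (t * (t * (m + Mb) - 2)) * s ≤ (t * (t * (m + Mb) - 2)) * (Mb * ‖x‖ ^ 2) :=
        mul_le_mul_of_nonneg_left hsu hcoef
      have hsq : (t * Mb - 1) ^ 2 ≤ c ^ 2 := pow_le_pow_left₀ h2m hc2 2
      have h5 : (t * Mb - 1) ^ 2 * ‖x‖ ^ 2 ≤ c ^ 2 * ‖x‖ ^ 2 :=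
        mul_le_mul_of_nonneg_right hsq (sq_nonneg _)
      have hgoal : (c * ‖x‖) ^ 2 = c ^ 2 * ‖x‖ ^ 2 := by ring
      rw [hTx, hgoal]
      nlinarith [hwb, hmul, h5]
  rw [happ]
  have h := Real.sqrt_le_sqrt hkey
  rwa [Real.sqrt_sq (norm_nonneg _), Real.sqrt_sq (mul_nonneg hc0 (norm_nonneg _))] at h

set_option maxHeartbeats 1000000 in
/-- The operator norm of `Id − (2/‖A‖_F²)·AᵀA` is at most
`max { 1 − 2/(‖A‖_F²·‖A⁻¹‖²), 2‖A‖²/‖A‖_F² − 1 }`. -/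
theorem opNorm_reflection_matrix_le_max {n : ℕ} (A : Matrix (Fin n) (Fin n) ℝ)
    (hA : IsUnit A) :
    opNorm ((1 : Matrix (Fin n) (Fin n) ℝ) - (2 / frobSq A) • (A.transpose * A))
      ≤ max (1 - 2 / (frobSq A * opNorm A⁻¹ ^ 2)) (2 * opNorm A ^ 2 / frobSq A - 1) := by
  rcases Nat.eq_zero_or_pos n with h0 | hn
  · subst h0
    have hzero : (Matrix.toEuclideanCLM (𝕜 := ℝ)
        ((1 : Matrix (Fin 0) (Fin 0) ℝ) - (2 / frobSq A) • (A.transpose * A))) = 0 := by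
      ext x i
      exact i.elim0
    have hop0 : opNorm ((1 : Matrix (Fin 0) (Fin 0) ℝ) - (2 / frobSq A) • (A.transpose * A)) = 0 := by
      rw [opNorm, hzero, norm_zero]
    have hf0 : frobSq A = 0 := by simp [frobSq]
    rw [hop0, hf0]
    have : (1 : ℝ) - 2 / (0 * opNorm A⁻¹ ^ 2) = 1 := by norm_num
    rw [this]
    exact le_max_of_le_left zero_le_one
  · have hdet : IsUnit A.det := (Matrix.isUnit_iff_isUnit_det A).mp hA
    set F := frobSq A with hF
    set na := opNorm A with hna
    set ni := opNorm A⁻¹ with hni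
    set B := Matrix.toEuclideanCLM (𝕜 := ℝ) A with hB
    set B' := Matrix.toEuclideanCLM (𝕜 := ℝ) A⁻¹ with hB'
    have hnaB : na = ‖B‖ := rfl
    have hniB : ni = ‖B'‖ := rfl
    have hinv : ∀ x : EuclideanSpace ℝ (Fin n), B' (B x) = x := by
      intro x
      have h1 : A⁻¹ * A = 1 := Matrix.nonsing_inv_mul A hdet
      have h2 := congrArg (Matrix.toEuclideanCLM (𝕜 := ℝ)) h1
      rw [map_mul, map_one] at h2
      calc B' (B x) = (B' * B) x := rfl
        _ = x := by rw [hB', hB, h2]; rfl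
    set x₀ : EuclideanSpace ℝ (Fin n) := EuclideanSpace.single ⟨0, hn⟩ (1 : ℝ) with hx₀
    have hx₀norm : ‖x₀‖ = 1 := by rw [hx₀, EuclideanSpace.norm_single]; norm_num
    have hx₀ne : x₀ ≠ 0 := by
      intro h
      rw [h, norm_zero] at hx₀norm
      norm_num at hx₀norm
    have hAne : A ≠ 0 := by
      rintro rfl
      have hd0 : (0 : Matrix (Fin n) (Fin n) ℝ).det = 0 := by
        haveI : Nonempty (Fin n) := ⟨⟨0, hn⟩⟩
        exact Matrix.det_zero
      rw [hd0] at hdet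
      exact not_isUnit_zero hdet
    have hFpos : 0 < F := by
      obtain ⟨i, j, hij⟩ : ∃ i j, A i j ≠ 0 := by
        by_contra h
        push_neg at h
        exact hAne (by ext i j; simp [h i j])
      have h1 : (A i j) ^ 2 ≤ ∑ j', (A i j') ^ 2 :=
        Finset.single_le_sum (f := fun j' => (A i j') ^ 2) (fun _ _ => sq_nonneg _) (mem_univ j)
      have h2 : ∑ j', (A i j') ^ 2 ≤ F :=
        Finset.single_le_sum (f := fun i => ∑ j', (A i j') ^ 2)
          (fun _ _ => Finset.sum_nonneg fun _ _ => sq_nonneg _) (mem_univ i)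
      have h3 : 0 < (A i j) ^ 2 := by positivity
      linarith
    have hnipos : 0 < ni := by
      rw [hniB, norm_pos_iff]
      intro h
      have := hinv x₀
      rw [h] at this
      rw [ContinuousLinearMap.zero_apply] at this
      exact hx₀ne this.symm
    set t := 2 / F with htdef
    have htpos : 0 < t := by positivity
    set m := 1 / ni ^ 2 with hmdef
    set Mb := na ^ 2 with hMbdef
    have hmpos : 0 < m := by positivity
    have hm : ∀ x : EuclideanSpace ℝ (Fin n), m * ‖x‖ ^ 2 ≤ ‖B x‖ ^ 2 := by
      intro x
      have h1 : ‖x‖ ≤ ni * ‖B x‖ := by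
        calc ‖x‖ = ‖B' (B x)‖ := by rw [hinv]
          _ ≤ ‖B'‖ * ‖B x‖ := B'.le_opNorm _
          _ = ni * ‖B x‖ := by rw [hniB]
      have h2 : ‖x‖ ^ 2 ≤ ni ^ 2 * ‖B x‖ ^ 2 := by nlinarith [norm_nonneg x, norm_nonneg (B x)]
      have h3 : m * ni ^ 2 = 1 := by rw [hmdef]; field_simp
      nlinarith [hmpos.le, h2, h3, sq_nonneg ‖B x‖]
    have hMb : ∀ x : EuclideanSpace ℝ (Fin n), ‖B x‖ ^ 2 ≤ Mb * ‖x‖ ^ 2 := by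
      intro x
      have h1 : ‖B x‖ ≤ na * ‖x‖ := by rw [hnaB]; exact B.le_opNorm _
      have h0 : 0 ≤ na := by rw [hnaB]; exact norm_nonneg B
      nlinarith [norm_nonneg (B x), norm_nonneg x, h0, h1]
    have hmM : m ≤ Mb := by
      have h1 := hm x₀
      have h2 := hMb x₀
      rw [hx₀norm] at h1 h2
      nlinarith [h1, h2]
    have ht' : A.transpose = star A := by
      ext i j
      simp [Matrix.star_eq_conjTranspose, Matrix.conjTranspose_apply]
    have hT : Matrix.toEuclideanCLM (𝕜 := ℝ)
        ((1 : Matrix (Fin n) (Fin n) ℝ) - (2 / F) • (A.transpose * A))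
        = 1 - t • (ContinuousLinearMap.adjoint B * B) := by
      rw [ht']
      simp only [map_sub, map_one, map_smul, map_mul, map_star]
      rw [← hB, ContinuousLinearMap.star_eq_adjoint, ← htdef]
    have hrhs : max (1 - 2 / (F * ni ^ 2)) (2 * na ^ 2 / F - 1)
        = max (1 - t * m) (t * Mb - 1) := by
      congr 1
      · rw [htdef, hmdef]; field_simp
      · rw [htdef, hMbdef]; ring
    rw [hrhs]
    calc opNorm ((1 : Matrix (Fin n) (Fin n) ℝ) - (2 / F) • (A.transpose * A))
        = ‖Matrix.toEuclideanCLM (𝕜 := ℝ)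
            ((1 : Matrix (Fin n) (Fin n) ℝ) - (2 / F) • (A.transpose * A))‖ := rfl
      _ = ‖(1 : (EuclideanSpace ℝ (Fin n)) →L[ℝ] (EuclideanSpace ℝ (Fin n)))
            - t • (ContinuousLinearMap.adjoint B * B)‖ := by rw [hT]
      _ ≤ max (1 - t * m) (t * Mb - 1) := op_bound B t m Mb htpos hmM hm hMb
end

section
/- Let A be an invertible n×n real matrix with n ≥ 2. Then ‖Id − (2/‖A‖_F²)·AᵀA‖ ≤ 1 − 2/(‖A‖_F²·‖A⁻¹‖²), where the left side is the operator norm of the matrix Id − (2/‖A‖_F²)·AᵀA. -/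
open scoped RealInnerProductSpace
open Finset

/-- A self-adjoint (symmetric) operator whose quadratic form is bounded by `K‖z‖²`
has operator norm at most `K`. -/
lemma aux_norm_le_of_inner {E : Type*} [NormedAddCommGroup E] [InnerProductSpace ℝ E]
    (T : E →L[ℝ] E) (hsym : ∀ u v : E, ⟪T u, v⟫ = ⟪u, T v⟫) {K : ℝ} (hK : 0 ≤ K)
    (hq : ∀ z : E, |⟪T z, z⟫| ≤ K * ‖z‖ ^ 2) : ‖T‖ ≤ K := by
  refine T.opNorm_le_bound hK fun x => ?_
  rcases eq_or_ne (T x) 0 with h0 | h0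
  · rw [h0, norm_zero]
    positivity
  rcases eq_or_ne x 0 with rfl | hx
  · simp
  have hTx : 0 < ‖T x‖ := norm_pos_iff.mpr h0
  have hxp : 0 < ‖x‖ := norm_pos_iff.mpr hx
  set y : E := (‖x‖ / ‖T x‖) • T x with hy
  have hyn : ‖y‖ = ‖x‖ := by
    rw [hy, norm_smul, Real.norm_of_nonneg (by positivity)]
    field_simp
  have hTxy : ⟪T x, y⟫ = ‖x‖ * ‖T x‖ := by
    rw [hy, real_inner_smul_right, real_inner_self_eq_norm_sq]
    field_simp
  have hsym' : ⟪T y, x⟫ = ⟪T x, y⟫ := by rw [hsym y x, real_inner_comm]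
  have key : 4 * ⟪T x, y⟫ = ⟪T (x + y), x + y⟫ - ⟪T (x - y), x - y⟫ := by
    simp only [map_add, map_sub, inner_add_left, inner_add_right, inner_sub_left,
      inner_sub_right, hsym']
    ring
  have hpar : ‖x + y‖ ^ 2 + ‖x - y‖ ^ 2 = 2 * (‖x‖ ^ 2 + ‖y‖ ^ 2) := by
    rw [@norm_add_sq_real, @norm_sub_sq_real]; ring
  have h1 : ⟪T (x + y), x + y⟫ ≤ K * ‖x + y‖ ^ 2 := (abs_le.mp (hq _)).2
  have h2 : -(K * ‖x - y‖ ^ 2) ≤ ⟪T (x - y), x - y⟫ := (abs_le.mp (hq _)).1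
  have h3 : 4 * (‖x‖ * ‖T x‖) ≤ K * (2 * (‖x‖ ^ 2 + ‖y‖ ^ 2)) := by
    rw [← hpar, ← hTxy]
    nlinarith [key, h1, h2]
  rw [hyn] at h3
  nlinarith [h3, hxp]

set_option maxHeartbeats 1600000

/-- For `n ≥ 2`, the operator norm of `Id − (2/‖A‖_F²)·AᵀA` is at most
`1 − 2/(‖A‖_F²·‖A⁻¹‖²)`. -/
theorem opNorm_reflection_matrix_le {n : ℕ} (hn : 2 ≤ n) (A : Matrix (Fin n) (Fin n) ℝ)
    (hA : IsUnit A) :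
    opNorm ((1 : Matrix (Fin n) (Fin n) ℝ) - (2 / frobSq A) • (A.transpose * A))
      ≤ 1 - 2 / (frobSq A * opNorm A⁻¹ ^ 2) := by
  haveI : NeZero n := ⟨by omega⟩
  set tA : (EuclideanSpace ℝ (Fin n)) →L[ℝ] (EuclideanSpace ℝ (Fin n)) := Matrix.toEuclideanCLM (𝕜 := ℝ) A with htA
  set F : ℝ := frobSq A with hF
  set N : ℝ := opNorm A⁻¹ with hNdef
  have hdet : IsUnit A.det := (Matrix.isUnit_iff_isUnit_det A).mp hA
  have hinvmul : A⁻¹ * A = 1 := Matrix.nonsing_inv_mul A hdet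
  -- A ≠ 0 and F > 0
  have hAne : A ≠ 0 := hA.ne_zero
  have hFpos : 0 < F := by
    obtain ⟨i, j, hij⟩ : ∃ i j, A i j ≠ 0 := by
      by_contra h
      push_neg at h
      exact hAne (by ext i j; simpa using h i j)
    have h1 : (A i j) ^ 2 ≤ ∑ j', (A i j') ^ 2 :=
      Finset.single_le_sum (f := fun j' => (A i j') ^ 2)
        (fun _ _ => sq_nonneg _) (Finset.mem_univ j)
    have h2 : ∑ j', (A i j') ^ 2 ≤ F :=
      Finset.single_le_sum (f := fun i' => ∑ j', (A i' j') ^ 2)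
        (fun _ _ => Finset.sum_nonneg fun _ _ => sq_nonneg _) (Finset.mem_univ i)
    have := sq_nonneg (A i j)
    have hne : 0 < (A i j) ^ 2 := by positivity
    linarith
  -- N > 0
  have hNpos : 0 < N := by
    have hinv_ne : A⁻¹ ≠ 0 := by
      intro h
      rw [h, zero_mul] at hinvmul
      exact one_ne_zero hinvmul.symm
    have : Matrix.toEuclideanCLM (𝕜 := ℝ) A⁻¹ ≠ 0 := by
      intro h
      apply hinv_ne
      have := (Matrix.toEuclideanCLM (𝕜 := ℝ) (n := Fin n)).injective
        (a₁ := A⁻¹) (a₂ := 0)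
      simp only [map_zero] at this
      exact this h
    simpa [hNdef, opNorm] using norm_pos_iff.mpr this
  -- inverse bound : ‖x‖ ≤ N * ‖tA x‖
  have hlow : ∀ x : (EuclideanSpace ℝ (Fin n)), ‖x‖ ≤ N * ‖tA x‖ := by
    intro x
    have hcomp : Matrix.toEuclideanCLM (𝕜 := ℝ) A⁻¹ (tA x) = x := by
      have : Matrix.toEuclideanCLM (𝕜 := ℝ) (A⁻¹ * A) = Matrix.toEuclideanCLM (𝕜 := ℝ) A⁻¹ *
          Matrix.toEuclideanCLM (𝕜 := ℝ) A := map_mul _ _ _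
      calc Matrix.toEuclideanCLM (𝕜 := ℝ) A⁻¹ (tA x)
          = (Matrix.toEuclideanCLM (𝕜 := ℝ) A⁻¹ * Matrix.toEuclideanCLM (𝕜 := ℝ) A) x := rfl
        _ = Matrix.toEuclideanCLM (𝕜 := ℝ) (A⁻¹ * A) x := by rw [this]
        _ = x := by rw [hinvmul, map_one]; rfl
    calc ‖x‖ = ‖Matrix.toEuclideanCLM (𝕜 := ℝ) A⁻¹ (tA x)‖ := by rw [hcomp]
      _ ≤ N * ‖tA x‖ := ContinuousLinearMap.le_opNorm _ _
  have hlowsq : ∀ x : (EuclideanSpace ℝ (Fin n)), ‖x‖ ^ 2 / N ^ 2 ≤ ‖tA x‖ ^ 2 := by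
    intro x
    rw [div_le_iff₀ (by positivity)]
    nlinarith [hlow x, norm_nonneg (tA x), norm_nonneg x]
  -- ‖tA x‖² = ∑ i, ⟪row A i, x⟫²
  have hrow_inner : ∀ (i : Fin n) (x : (EuclideanSpace ℝ (Fin n))), ⟪row A i, x⟫ = ∑ j, A i j * x j := by
    intro i x
    simp [row, PiLp.inner_apply, RCLike.inner_apply, PiLp.toLp_apply]
    exact Finset.sum_congr rfl fun _ _ => mul_comm _ _
  have htA_apply : ∀ (x : (EuclideanSpace ℝ (Fin n))) (i : Fin n), tA x i = ∑ j, A i j * x j := by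
    intro x i
    have h1 : tA ((WithLp.equiv 2 (Fin n → ℝ)).symm (WithLp.equiv 2 (Fin n → ℝ) x)) =
        (WithLp.equiv 2 (Fin n → ℝ)).symm (A.mulVec (WithLp.equiv 2 (Fin n → ℝ) x)) :=
      Matrix.toEuclideanCLM_toLp A _
    simp only [Equiv.symm_apply_apply] at h1
    rw [h1]
    simp [Matrix.mulVec, dotProduct, PiLp.toLp_apply]
  have htAnormsq : ∀ x : (EuclideanSpace ℝ (Fin n)), ‖tA x‖ ^ 2 = ∑ i, ⟪row A i, x⟫ ^ 2 := by
    intro x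
    rw [← real_inner_self_eq_norm_sq]
    rw [PiLp.inner_apply]
    refine Finset.sum_congr rfl fun i _ => ?_
    rw [hrow_inner, htA_apply]
    simp [RCLike.inner_apply]
  -- F = ∑ i, ‖row A i‖²
  have hFrows : F = ∑ i, ‖row A i‖ ^ 2 := by
    rw [hF, frobSq]
    refine Finset.sum_congr rfl fun i _ => ?_
    rw [← real_inner_self_eq_norm_sq, PiLp.inner_apply]
    refine Finset.sum_congr rfl fun j _ => ?_
    simp [row, RCLike.inner_apply, PiLp.toLp_apply]
  -- upper bound on ‖tA x‖²
  have hup : ∀ x : (EuclideanSpace ℝ (Fin n)), ‖tA x‖ ^ 2 ≤ (F - 1 / N ^ 2) * ‖x‖ ^ 2 := by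
    intro x
    rcases eq_or_ne x 0 with rfl | hx
    · simp
    have hxp : 0 < ‖x‖ := norm_pos_iff.mpr hx
    -- find a unit vector orthogonal to x
    haveI : Fact (Module.finrank ℝ (EuclideanSpace ℝ (Fin n)) = (n - 1) + 1) :=
      ⟨by rw [finrank_euclideanSpace_fin]; omega⟩
    obtain ⟨y, hxy, hy1⟩ : ∃ y : (EuclideanSpace ℝ (Fin n)), ⟪x, y⟫ = 0 ∧ ‖y‖ = 1 := by
      have hrank : Module.finrank ℝ
          ((ℝ ∙ x)ᗮ : Submodule ℝ (EuclideanSpace ℝ (Fin n))) = n - 1 := by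
        rw [Submodule.finrank_orthogonal_span_singleton (n := n - 1) hx]
      haveI : Nontrivial ((ℝ ∙ x)ᗮ : Submodule ℝ (EuclideanSpace ℝ (Fin n))) := by
        apply Module.nontrivial_of_finrank_pos (R := ℝ)
        rw [hrank]; omega
      obtain ⟨y0, hy0⟩ := exists_ne (0 : ((ℝ ∙ x)ᗮ : Submodule ℝ (EuclideanSpace ℝ (Fin n))))
      have hy0ne : (y0 : (EuclideanSpace ℝ (Fin n))) ≠ 0 := fun h => hy0 (Subtype.ext h)
      have hy0p : 0 < ‖(y0 : (EuclideanSpace ℝ (Fin n)))‖ := norm_pos_iff.mpr hy0ne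
      refine ⟨‖(y0 : (EuclideanSpace ℝ (Fin n)))‖⁻¹ • (y0 : (EuclideanSpace ℝ (Fin n))), ?_, ?_⟩
      · have hmem : (y0 : (EuclideanSpace ℝ (Fin n))) ∈ (ℝ ∙ x)ᗮ := y0.2
        have := Submodule.mem_orthogonal_singleton_iff_inner_right.mp hmem
        rw [real_inner_smul_right, this, mul_zero]
      · rw [norm_smul, Real.norm_of_nonneg (by positivity)]
        field_simp
    -- orthonormal family ![‖x‖⁻¹ • x, y]
    set u : (EuclideanSpace ℝ (Fin n)) := ‖x‖⁻¹ • x with hu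
    have hun : ‖u‖ = 1 := by
      rw [hu, norm_smul, Real.norm_of_nonneg (by positivity)]
      field_simp
    have huy : ⟪u, y⟫ = 0 := by rw [hu, real_inner_smul_left, hxy, mul_zero]
    have huu : ⟪u, u⟫ = 1 := by rw [real_inner_self_eq_norm_sq, hun]; norm_num
    have hyy : ⟪y, y⟫ = 1 := by rw [real_inner_self_eq_norm_sq, hy1]; norm_num
    have hyu : ⟪y, u⟫ = 0 := by rw [real_inner_comm]; exact huy
    -- Bessel on each row
    have hbessel : ∀ a : EuclideanSpace ℝ (Fin n), ⟪a, u⟫ ^ 2 + ⟪a, y⟫ ^ 2 ≤ ‖a‖ ^ 2 := by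
      intro a
      have h0 : (0 : ℝ) ≤ ⟪a - ⟪a, u⟫ • u - ⟪a, y⟫ • y, a - ⟪a, u⟫ • u - ⟪a, y⟫ • y⟫ :=
        real_inner_self_nonneg
      have hexp : ⟪a - ⟪a, u⟫ • u - ⟪a, y⟫ • y, a - ⟪a, u⟫ • u - ⟪a, y⟫ • y⟫ =
          ‖a‖ ^ 2 - ⟪a, u⟫ ^ 2 - ⟪a, y⟫ ^ 2 := by
        simp only [inner_sub_left, inner_sub_right, real_inner_smul_left,
          real_inner_smul_right, huu, hyy, huy, hyu, real_inner_comm u a,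
          real_inner_comm y a, ← real_inner_self_eq_norm_sq]
        ring
      rw [hexp] at h0
      linarith
    have hsum : ‖tA u‖ ^ 2 + ‖tA y‖ ^ 2 ≤ F := by
      rw [htAnormsq, htAnormsq, hFrows, ← Finset.sum_add_distrib]
      refine Finset.sum_le_sum fun i _ => ?_
      exact hbessel (row A i)
    have hAy : 1 / N ^ 2 ≤ ‖tA y‖ ^ 2 := by
      have := hlowsq y
      rwa [hy1, one_pow] at this
    have hAu : ‖tA u‖ ^ 2 = ‖tA x‖ ^ 2 / ‖x‖ ^ 2 := by
      rw [hu, map_smul, norm_smul, Real.norm_of_nonneg (by positivity)]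
      field_simp
      try ring
    have : ‖tA x‖ ^ 2 / ‖x‖ ^ 2 ≤ F - 1 / N ^ 2 := by
      rw [← hAu]
      linarith
    calc ‖tA x‖ ^ 2 = (‖tA x‖ ^ 2 / ‖x‖ ^ 2) * ‖x‖ ^ 2 := by field_simp
      _ ≤ (F - 1 / N ^ 2) * ‖x‖ ^ 2 := by
          apply mul_le_mul_of_nonneg_right this (by positivity)
  -- K ≥ 0
  have hFN : 2 / N ^ 2 ≤ F := by
    set z : (EuclideanSpace ℝ (Fin n)) := EuclideanSpace.single (0 : Fin n) (1 : ℝ) with hz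
    have hzn : ‖z‖ = 1 := by
      rw [hz, EuclideanSpace.norm_single]
      exact norm_one
    have h1 := hlowsq z
    have h2 := hup z
    rw [hzn] at h1 h2
    simp only [one_pow, mul_one] at h1 h2
    have h3 := le_trans h1 h2
    have hN2 : 0 < N ^ 2 := by positivity
    rw [div_le_iff₀ hN2] at h3 ⊢
    have hexp : (F - 1 / N ^ 2) * N ^ 2 = F * N ^ 2 - 1 := by
      field_simp
    linarith
  set K : ℝ := 1 - 2 / (F * N ^ 2) with hK
  have hKnonneg : 0 ≤ K := by
    rw [hK, sub_nonneg, div_le_one (by positivity)]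
    have : 2 / N ^ 2 * N ^ 2 ≤ F * N ^ 2 :=
      mul_le_mul_of_nonneg_right hFN (by positivity)
    rw [div_mul_cancel₀] at this
    · linarith
    · positivity
  -- the operator
  set M : Matrix (Fin n) (Fin n) ℝ := 1 - (2 / F) • (A.transpose * A) with hM
  set tM : (EuclideanSpace ℝ (Fin n)) →L[ℝ] (EuclideanSpace ℝ (Fin n)) := Matrix.toEuclideanCLM (𝕜 := ℝ) M with htM
  -- self-adjointness
  have hMstar : star M = M := by
    rw [hM]
    simp only [star_sub, star_one, star_smul, star_trivial]
    congr 1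
    rw [Matrix.star_eq_conjTranspose, Matrix.conjTranspose_mul]
    congr 1 <;>
      simp [Matrix.conjTranspose, Matrix.transpose_map, Matrix.map_id']
  have hsa : IsSelfAdjoint tM := by
    rw [htM, IsSelfAdjoint, ← map_star, hMstar]
  have hsym : ∀ u v : (EuclideanSpace ℝ (Fin n)), ⟪tM u, v⟫ = ⟪u, tM v⟫ := by
    intro u v
    have hadj : ContinuousLinearMap.adjoint tM = tM :=
      ContinuousLinearMap.isSelfAdjoint_iff'.mp hsa
    calc ⟪tM u, v⟫ = ⟪v, tM u⟫ := real_inner_comm _ _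
      _ = ⟪(ContinuousLinearMap.adjoint tM) v, u⟫ :=
          (ContinuousLinearMap.adjoint_inner_left tM u v).symm
      _ = ⟪tM v, u⟫ := by rw [hadj]
      _ = ⟪u, tM v⟫ := real_inner_comm _ _
  -- quadratic form
  have hquad : ∀ z : (EuclideanSpace ℝ (Fin n)), ⟪tM z, z⟫ = ‖z‖ ^ 2 - (2 / F) * ‖tA z‖ ^ 2 := by
    intro z
    have hAT : Matrix.toEuclideanCLM (𝕜 := ℝ) A.transpose =
        ContinuousLinearMap.adjoint tA := by
      have h1 : star A = A.transpose := by
        rw [Matrix.star_eq_conjTranspose]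
        ext i j
        simp [Matrix.conjTranspose_apply]
      rw [← h1, map_star, htA, ContinuousLinearMap.star_eq_adjoint]
    have hop : tM = 1 - (2 / F) • (ContinuousLinearMap.adjoint tA * tA) := by
      rw [htM, hM, map_sub, map_one, map_smul, map_mul, hAT, htA]
    have hMz : tM z = z - (2 / F) • (ContinuousLinearMap.adjoint tA (tA z)) := by
      rw [hop]
      simp only [ContinuousLinearMap.sub_apply, ContinuousLinearMap.one_apply,
        ContinuousLinearMap.smul_apply, ContinuousLinearMap.mul_apply]
    rw [hMz, inner_sub_left, real_inner_smul_left,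
      ContinuousLinearMap.adjoint_inner_left, real_inner_self_eq_norm_sq,
      real_inner_self_eq_norm_sq]
  -- combination
  have hbound : ∀ z : (EuclideanSpace ℝ (Fin n)), |⟪tM z, z⟫| ≤ K * ‖z‖ ^ 2 := by
    intro z
    rw [hquad, abs_le]
    have h1 := hlowsq z
    have h2 := hup z
    have hN2 : 0 < N ^ 2 := by positivity
    constructor
    · have : (2 / F) * ‖tA z‖ ^ 2 ≤ (2 / F) * ((F - 1 / N ^ 2) * ‖z‖ ^ 2) :=
        mul_le_mul_of_nonneg_left h2 (by positivity)
      have hexp : (2 / F) * ((F - 1 / N ^ 2) * ‖z‖ ^ 2) =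
          2 * ‖z‖ ^ 2 - (2 / (F * N ^ 2)) * ‖z‖ ^ 2 := by
        field_simp
        try ring
      rw [hK]
      nlinarith [this, hexp]
    · have : (2 / F) * (‖z‖ ^ 2 / N ^ 2) ≤ (2 / F) * ‖tA z‖ ^ 2 :=
        mul_le_mul_of_nonneg_left h1 (by positivity)
      have hexp : (2 / F) * (‖z‖ ^ 2 / N ^ 2) = (2 / (F * N ^ 2)) * ‖z‖ ^ 2 := by
        field_simp
        try ring
      rw [hK]
      nlinarith [this, hexp]
  have hfin : ‖tM‖ ≤ K := aux_norm_le_of_inner tM hsym hKnonneg hbound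
  exact hfin
end

section
/- (Lemma, case k = 1) Let A be an invertible n×n real matrix with n ≥ 2 and rows a₁,…,aₙ. Then for every x ∈ ℝⁿ, | Σ_{i=1}^{n} (‖a_i‖²/‖A‖_F²)·⟨x, x − 2·(⟨x, a_i⟩/‖a_i‖²)·a_i⟩ | ≤ (1 − 2/(‖A⁻¹‖²·‖A‖_F²))·‖x‖². -/
set_option maxHeartbeats 1000000


open scoped RealInnerProductSpace
open Finset

lemma enorm_sq_eq {n : ℕ} (v : EuclideanSpace ℝ (Fin n)) : ‖v‖ ^ 2 = ∑ i, (v i) ^ 2 := by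
  rw [← real_inner_self_eq_norm_sq]
  simp only [PiLp.inner_apply, RCLike.inner_apply, conj_trivial, sq]

lemma inner_row_eq {n : ℕ} (A : Matrix (Fin n) (Fin n) ℝ) (i : Fin n)
    (x : EuclideanSpace ℝ (Fin n)) : ⟪x, row A i⟫ = ∑ j, A i j * x j := by
  simp [row, PiLp.inner_apply, RCLike.inner_apply, mul_comm]

lemma fA_apply {n : ℕ} (A : Matrix (Fin n) (Fin n) ℝ) (x : EuclideanSpace ℝ (Fin n)) (i : Fin n) :
    (Matrix.toEuclideanCLM (𝕜 := ℝ) A x) i = ∑ j, A i j * x j := by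
  show (WithLp.equiv 2 (Fin n → ℝ) (Matrix.toEuclideanCLM (𝕜 := ℝ) A x)) i = _
  rw [WithLp.equiv_apply, Matrix.ofLp_toEuclideanCLM]
  simp [Matrix.toLin'_apply, Matrix.mulVec, dotProduct]

lemma sum_inner_row_sq {n : ℕ} (A : Matrix (Fin n) (Fin n) ℝ) (x : EuclideanSpace ℝ (Fin n)) :
    ∑ i, ⟪x, row A i⟫ ^ 2 = ‖Matrix.toEuclideanCLM (𝕜 := ℝ) A x‖ ^ 2 := by
  rw [enorm_sq_eq]
  exact Finset.sum_congr rfl fun i _ => by rw [inner_row_eq, fA_apply]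

/-- Lemma (case k = 1): `|E⟨x, Rx⟩| ≤ (1 − 2/(‖A⁻¹‖²·‖A‖_F²))·‖x‖²`. -/
theorem abs_expected_inner_le_one_step {n : ℕ} (hn : 2 ≤ n) (A : Matrix (Fin n) (Fin n) ℝ)
    (hA : IsUnit A) (x : EuclideanSpace ℝ (Fin n)) :
    |∑ i, (‖row A i‖ ^ 2 / frobSq A) *
        ⟪x, x - (2 * (⟪x, row A i⟫ / ‖row A i‖ ^ 2)) • row A i⟫|
      ≤ (1 - 2 / (opNorm A⁻¹ ^ 2 * frobSq A)) * ‖x‖ ^ 2 := by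
  have hdet : IsUnit A.det := (Matrix.isUnit_iff_isUnit_det A).mp hA
  set K := opNorm A⁻¹ with hKdef
  set F := frobSq A with hFdef
  -- rows are nonzero
  have hrow : ∀ i, row A i ≠ 0 := by
    intro i h
    have h1 : A i = 0 := by
      funext j
      have := congrFun (congrArg (WithLp.equiv 2 (Fin n → ℝ)) h) j
      simpa [row] using this
    have h2 : (A * A⁻¹) i i = 1 := by
      rw [Matrix.mul_nonsing_inv A hdet]; simp
    rw [Matrix.mul_apply] at h2
    simp [h1] at h2
  have hrowsq : ∀ i, (0:ℝ) < ‖row A i‖ ^ 2 := fun i =>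
    pow_pos (norm_pos_iff.mpr (hrow i)) 2
  -- Frobenius norm as sum of row norms
  have hFrows : F = ∑ i, ‖row A i‖ ^ 2 := by
    rw [hFdef, frobSq]
    exact Finset.sum_congr rfl fun i _ => by
      rw [enorm_sq_eq]
      exact Finset.sum_congr rfl fun j _ => by simp [row]
  have hFpos : 0 < F := by
    rw [hFrows]
    exact Finset.sum_pos (fun i _ => hrowsq i) ⟨⟨0, by omega⟩, Finset.mem_univ _⟩
  -- the inverse map
  have key : ∀ y : EuclideanSpace ℝ (Fin n),
      Matrix.toEuclideanCLM (𝕜 := ℝ) A⁻¹ (Matrix.toEuclideanCLM (𝕜 := ℝ) A y) = y := by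
    intro y
    have hm : (Matrix.toEuclideanCLM (𝕜 := ℝ) A⁻¹) * (Matrix.toEuclideanCLM (𝕜 := ℝ) A) = 1 := by
      rw [← map_mul, Matrix.nonsing_inv_mul A hdet, map_one]
    calc Matrix.toEuclideanCLM (𝕜 := ℝ) A⁻¹ (Matrix.toEuclideanCLM (𝕜 := ℝ) A y)
        = ((Matrix.toEuclideanCLM (𝕜 := ℝ) A⁻¹) * (Matrix.toEuclideanCLM (𝕜 := ℝ) A)) y := rfl
      _ = y := by rw [hm]; rfl
  have hKle : ∀ y : EuclideanSpace ℝ (Fin n),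
      ‖y‖ ≤ K * ‖Matrix.toEuclideanCLM (𝕜 := ℝ) A y‖ := by
    intro y
    conv_lhs => rw [← key y]
    exact (Matrix.toEuclideanCLM (𝕜 := ℝ) A⁻¹).le_opNorm _
  have hKpos : 0 < K := by
    rcases lt_or_ge 0 K with h | h
    · exact h
    · exfalso
      have e : EuclideanSpace ℝ (Fin n) := EuclideanSpace.single ⟨0, by omega⟩ (1:ℝ)
      have h1 := hKle (EuclideanSpace.single ⟨0, by omega⟩ (1:ℝ))
      have h2 : ‖EuclideanSpace.single (⟨0, by omega⟩ : Fin n) (1:ℝ)‖ = 1 := by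
        simp [EuclideanSpace.norm_single]
      nlinarith [norm_nonneg (Matrix.toEuclideanCLM (𝕜 := ℝ) A
        (EuclideanSpace.single (⟨0, by omega⟩ : Fin n) (1:ℝ)))]
  set S := ∑ i, ⟪x, row A i⟫ ^ 2 with hSdef
  have hSnonneg : 0 ≤ S := Finset.sum_nonneg fun i _ => sq_nonneg _
  -- simplify the sum
  have hsum : ∑ i, (‖row A i‖ ^ 2 / F) *
      ⟪x, x - (2 * (⟪x, row A i⟫ / ‖row A i‖ ^ 2)) • row A i⟫ = ‖x‖ ^ 2 - 2 * S / F := by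
    have hterm : ∀ i, (‖row A i‖ ^ 2 / F) *
        ⟪x, x - (2 * (⟪x, row A i⟫ / ‖row A i‖ ^ 2)) • row A i⟫
        = ‖row A i‖ ^ 2 * ‖x‖ ^ 2 / F - 2 * ⟪x, row A i⟫ ^ 2 / F := by
      intro i
      rw [inner_sub_right, real_inner_smul_right, real_inner_self_eq_norm_sq]
      field_simp [(hrowsq i).ne', norm_ne_zero_iff.mpr (hrow i)]
    rw [Finset.sum_congr rfl fun i _ => hterm i, Finset.sum_sub_distrib, hSdef,
      ← Finset.sum_div, ← Finset.sum_div, ← Finset.sum_mul, ← hFrows, Finset.mul_sum]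
    field_simp
  -- lower bound on S
  have hS1 : ‖x‖ ^ 2 ≤ K ^ 2 * S := by
    have := hKle x
    rw [hSdef, sum_inner_row_sq]
    nlinarith [norm_nonneg x, norm_nonneg (Matrix.toEuclideanCLM (𝕜 := ℝ) A x), hKpos]
  -- upper bound on S
  have hS2 : S ≤ (F - 1 / K ^ 2) * ‖x‖ ^ 2 := by
    rcases eq_or_ne x 0 with rfl | hx
    · simp [hSdef]
    · have hxpos : 0 < ‖x‖ := norm_pos_iff.mpr hx
      set u : EuclideanSpace ℝ (Fin n) := ‖x‖⁻¹ • x with hu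
      -- find a unit vector orthogonal to x
      have hne : (ℝ ∙ x)ᗮ ≠ ⊥ := by
        intro hbot
        have htop : (ℝ ∙ x) = ⊤ := by
          have := Submodule.orthogonal_eq_bot_iff.mp hbot
          exact this
        have h1 : Module.finrank ℝ (ℝ ∙ x) = 1 := finrank_span_singleton hx
        have h2 : Module.finrank ℝ (EuclideanSpace ℝ (Fin n)) = n := finrank_euclideanSpace_fin
        rw [htop, finrank_top] at h1
        omega
      obtain ⟨w, hw, hw0⟩ := Submodule.exists_mem_ne_zero_of_ne_bot hne
      set v : EuclideanSpace ℝ (Fin n) := ‖w‖⁻¹ • w with hv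
      have hwpos : 0 < ‖w‖ := norm_pos_iff.mpr hw0
      have hvnorm : ‖v‖ = 1 := by
        rw [hv, norm_smul]; simp [hwpos.ne', abs_of_pos (inv_pos.mpr hwpos),
          inv_mul_cancel₀ hwpos.ne']
      have hunorm : ‖u‖ = 1 := by
        rw [hu, norm_smul]; simp [abs_of_pos (inv_pos.mpr hxpos),
          inv_mul_cancel₀ hxpos.ne']
      have hxw : ⟪x, w⟫ = 0 := hw x (Submodule.mem_span_singleton_self x)
      have huv : ⟪u, v⟫ = 0 := by
        rw [hu, hv, real_inner_smul_left, real_inner_smul_right, hxw]; ring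
      have hvu : ⟪v, u⟫ = 0 := by rw [real_inner_comm]; exact huv
      have huu : ⟪u, u⟫ = 1 := by rw [real_inner_self_eq_norm_sq, hunorm]; norm_num
      have hvv : ⟪v, v⟫ = 1 := by rw [real_inner_self_eq_norm_sq, hvnorm]; norm_num
      have hOn : Orthonormal ℝ ![u, v] := by
        rw [orthonormal_iff_ite]
        intro i j
        fin_cases i <;> fin_cases j <;>
          simp only [Matrix.cons_val_zero, Matrix.cons_val_one, Matrix.head_cons] <;>
          norm_num [huu, hvv, huv, hvu, hunorm, hvnorm]
      have bess : ∀ i, ⟪u, row A i⟫ ^ 2 + ⟪v, row A i⟫ ^ 2 ≤ ‖row A i‖ ^ 2 := by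
        intro i
        have := hOn.sum_inner_products_le (s := Finset.univ) (row A i)
        rw [Fin.sum_univ_two] at this
        simpa [Real.norm_eq_abs, sq_abs] using this
      have hsumb : (∑ i, ⟪u, row A i⟫ ^ 2) + (∑ i, ⟪v, row A i⟫ ^ 2) ≤ F := by
        rw [← Finset.sum_add_distrib, hFrows]
        exact Finset.sum_le_sum fun i _ => bess i
      have hv2 : 1 / K ^ 2 ≤ ∑ i, ⟪v, row A i⟫ ^ 2 := by
        rw [sum_inner_row_sq]
        have h1 := hKle v
        rw [hvnorm] at h1
        rw [div_le_iff₀ (by positivity)]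
        nlinarith [norm_nonneg (Matrix.toEuclideanCLM (𝕜 := ℝ) A v)]
      have hu2 : ∑ i, ⟪u, row A i⟫ ^ 2 = S / ‖x‖ ^ 2 := by
        rw [hSdef, Finset.sum_div]
        refine Finset.sum_congr rfl fun i _ => ?_
        rw [hu, real_inner_smul_left]
        field_simp
      rw [hu2] at hsumb
      have h3 : S / ‖x‖ ^ 2 ≤ F - 1 / K ^ 2 := by linarith
      calc S = S / ‖x‖ ^ 2 * ‖x‖ ^ 2 := by field_simp
        _ ≤ (F - 1 / K ^ 2) * ‖x‖ ^ 2 := mul_le_mul_of_nonneg_right h3 (sq_nonneg _)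
  -- finish
  rw [hsum, abs_le]
  have hKF : 0 < K ^ 2 * F := by positivity
  have hb : 2 / (K ^ 2 * F) * ‖x‖ ^ 2 ≤ 2 * S / F := by
    calc 2 / (K ^ 2 * F) * ‖x‖ ^ 2 ≤ 2 / (K ^ 2 * F) * (K ^ 2 * S) :=
          mul_le_mul_of_nonneg_left hS1 (by positivity)
      _ = 2 * S / F := by field_simp
  have hc : 2 * S / F ≤ 2 * ((F - 1 / K ^ 2) * ‖x‖ ^ 2) / F := by gcongr
  have hd : 2 * ((F - 1 / K ^ 2) * ‖x‖ ^ 2) / F = (2 - 2 / (K ^ 2 * F)) * ‖x‖ ^ 2 := by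
    field_simp
  constructor
  · nlinarith [hc, hd]
  · nlinarith [hb]
end

section
/- (Lemma) Let A be an invertible n×n real matrix with n ≥ 2 and rows a₁,…,aₙ. Then for every x ∈ ℝⁿ and every k ∈ ℕ, the expectation over k independent random reflections satisfies |E⟨x, R^k x⟩| ≤ (1 − 2/(‖A⁻¹‖²·‖A‖_F²))^k · ‖x‖², where E⟨x, R^k x⟩ = Σ over all (i₁,…,i_k) ∈ {1,…,n}^k of (∏_{j=1}^{k} ‖a_{i_j}‖²/‖A‖_F²)·⟨x, (R_{i_k}∘⋯∘R_{i_1})(x)⟩. -/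
open scoped RealInnerProductSpace
open Finset

variable {n : ℕ} (A : Matrix (Fin n) (Fin n) ℝ)

noncomputable def reflLM (i : Fin n) :
    EuclideanSpace ℝ (Fin n) →ₗ[ℝ] EuclideanSpace ℝ (Fin n) where
  toFun x := reflRow A i x
  map_add' x y := by
    simp only [reflRow, inner_add_left, add_div, mul_add, add_smul]
    abel
  map_smul' c x := by
    simp only [reflRow, real_inner_smul_left, RingHom.id_apply, smul_sub, mul_div_assoc]
    rw [smul_smul]
    ring_nf

lemma reflLM_apply (i : Fin n) (x : EuclideanSpace ℝ (Fin n)) :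
    reflLM A i x = reflRow A i x := rfl

noncomputable def TLM : EuclideanSpace ℝ (Fin n) →ₗ[ℝ] EuclideanSpace ℝ (Fin n) :=
  ∑ i, (‖row A i‖ ^ 2 / frobSq A) • reflLM A i


lemma sum_snoc {k : ℕ} {M : Type*} [AddCommMonoid M] (G : Fin n → (Fin k → Fin n) → M) :
    ∑ is : Fin (k+1) → Fin n, G (is (Fin.last k)) (fun j => is j.castSucc)
      = ∑ i, ∑ is : Fin k → Fin n, G i is := by
  rw [← Equiv.sum_comp (Fin.snocEquiv (fun _ => Fin n)), Fintype.sum_prod_type]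
  refine Finset.sum_congr rfl fun i _ => Finset.sum_congr rfl fun is _ => ?_
  simp [Fin.snocEquiv]

lemma sum_applySeq (k : ℕ) (x : EuclideanSpace ℝ (Fin n)) :
    ∑ is : Fin k → Fin n, (∏ j, ‖row A (is j)‖ ^ 2 / frobSq A) • applySeq A k is x
      = ((TLM A) ^ k) x := by
  induction k with
  | zero => simp [applySeq]
  | succ k ih =>
    have step : ∀ is : Fin (k+1) → Fin n,
        (∏ j, ‖row A (is j)‖ ^ 2 / frobSq A) • applySeq A (k+1) is x
        = ((‖row A (is (Fin.last k))‖ ^ 2 / frobSq A) *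
            ∏ j : Fin k, ‖row A (is j.castSucc)‖ ^ 2 / frobSq A) •
           reflLM A (is (Fin.last k)) (applySeq A k (fun j => is j.castSucc) x) := by
      intro is
      rw [Fin.prod_univ_castSucc, mul_comm]
      rfl
    rw [Finset.sum_congr rfl (fun is _ => step is),
      sum_snoc (G := fun i is' => ((‖row A i‖ ^ 2 / frobSq A) *
        ∏ j : Fin k, ‖row A (is' j)‖ ^ 2 / frobSq A) •
          reflLM A i (applySeq A k is' x))]
    have : ∀ i : Fin n,
        ∑ is' : Fin k → Fin n, ((‖row A i‖ ^ 2 / frobSq A) *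
          ∏ j : Fin k, ‖row A (is' j)‖ ^ 2 / frobSq A) •
            reflLM A i (applySeq A k is' x)
        = (‖row A i‖ ^ 2 / frobSq A) • reflLM A i (((TLM A) ^ k) x) := by
      intro i
      rw [← ih, map_sum, Finset.smul_sum]
      exact Finset.sum_congr rfl fun is' _ => by
        rw [map_smul, smul_smul]
    rw [Finset.sum_congr rfl (fun i _ => this i), pow_succ', Module.End.mul_apply]
    simp [TLM, LinearMap.sum_apply]

lemma inner_euclidean (x y : EuclideanSpace ℝ (Fin n)) : ⟪x, y⟫ = ∑ i, x i * y i := by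
  simp [PiLp.inner_apply, RCLike.inner_apply, conj_trivial]
  exact Finset.sum_congr rfl fun i _ => mul_comm _ _

lemma norm_sq_eq (y : EuclideanSpace ℝ (Fin n)) : ‖y‖ ^ 2 = ∑ i, (y i) ^ 2 := by
  rw [← real_inner_self_eq_norm_sq, inner_euclidean]
  simp [sq]

lemma row_apply (i j : Fin n) : row A i j = A i j := rfl

lemma frob_eq : frobSq A = ∑ i, ‖row A i‖ ^ 2 := by
  unfold frobSq
  exact Finset.sum_congr rfl fun i _ => by rw [norm_sq_eq]; rfl

noncomputable def qf (y : EuclideanSpace ℝ (Fin n)) : ℝ := ∑ i, ⟪y, row A i⟫ ^ 2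

lemma qf_eq (y : EuclideanSpace ℝ (Fin n)) :
    ‖Matrix.toEuclideanCLM (𝕜 := ℝ) A y‖ ^ 2 = qf A y := by
  rw [norm_sq_eq]
  unfold qf
  refine Finset.sum_congr rfl fun i _ => ?_
  have h1 : (Matrix.toEuclideanCLM (𝕜 := ℝ) A y) i = ∑ j, A i j * y j := rfl
  rw [h1, inner_euclidean]
  congr 1
  exact Finset.sum_congr rfl fun j _ => by rw [row_apply, mul_comm]

lemma cancel_inv (hA : IsUnit A) (y : EuclideanSpace ℝ (Fin n)) :
    Matrix.toEuclideanCLM (𝕜 := ℝ) A⁻¹ (Matrix.toEuclideanCLM (𝕜 := ℝ) A y) = y := by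
  rw [← ContinuousLinearMap.mul_apply, ← map_mul,
    Matrix.nonsing_inv_mul A ((Matrix.isUnit_iff_isUnit_det A).mp hA), map_one,
    ContinuousLinearMap.one_apply]

lemma norm_le_opNorm_mul (hA : IsUnit A) (y : EuclideanSpace ℝ (Fin n)) :
    ‖y‖ ≤ opNorm A⁻¹ * ‖Matrix.toEuclideanCLM (𝕜 := ℝ) A y‖ := by
  conv_lhs => rw [← cancel_inv A hA y]
  exact (Matrix.toEuclideanCLM (𝕜 := ℝ) A⁻¹).le_opNorm _

lemma qf_lower (hA : IsUnit A) (y : EuclideanSpace ℝ (Fin n)) :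
    ‖y‖ ^ 2 ≤ opNorm A⁻¹ ^ 2 * qf A y := by
  have h := norm_le_opNorm_mul A hA y
  rw [← qf_eq]
  nlinarith [norm_nonneg y, norm_nonneg (Matrix.toEuclideanCLM (𝕜 := ℝ) A y),
    norm_nonneg (Matrix.toEuclideanCLM (𝕜 := ℝ) A⁻¹)]

lemma qf_nonneg (y : EuclideanSpace ℝ (Fin n)) : 0 ≤ qf A y :=
  Finset.sum_nonneg fun i _ => sq_nonneg _

lemma opNorm_nonneg : 0 ≤ opNorm A⁻¹ := norm_nonneg _

lemma rownormsq_pos (hA : IsUnit A) (i : Fin n) : 0 < ‖row A i‖ ^ 2 := by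
  have hr : row A i ≠ 0 := by
    intro h
    have hAi : ∀ j, A i j = 0 := fun j => by
      have : row A i j = (0 : EuclideanSpace ℝ (Fin n)) j := by rw [h]
      simpa [row_apply] using this
    have hdet : A.det = 0 := Matrix.det_eq_zero_of_row_eq_zero i hAi
    have := (Matrix.isUnit_iff_isUnit_det A).mp hA
    rw [hdet] at this
    exact (by simpa using this : False)
  exact pow_pos (norm_pos_iff.mpr hr) 2

lemma frob_pos (hn : 2 ≤ n) (hA : IsUnit A) : 0 < frobSq A := by
  have : Nonempty (Fin n) := Fin.pos_iff_nonempty.mp (by omega)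
  rw [frob_eq]
  exact Finset.sum_pos (fun i _ => rownormsq_pos A hA i) Finset.univ_nonempty

lemma opNorm_inv_pos (hn : 2 ≤ n) (hA : IsUnit A) : 0 < opNorm A⁻¹ := by
  have h0 : (0 : ℕ) < n := by omega
  set y : EuclideanSpace ℝ (Fin n) := EuclideanSpace.single (⟨0, h0⟩ : Fin n) (1 : ℝ)
  have hy : ‖y‖ = 1 := by simp [y, EuclideanSpace.norm_single]
  have h := norm_le_opNorm_mul A hA y
  rw [hy] at h
  nlinarith [norm_nonneg (Matrix.toEuclideanCLM (𝕜 := ℝ) A y), opNorm_nonneg A]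

lemma inner_single_right' (y : EuclideanSpace ℝ (Fin n)) (j : Fin n) :
    ⟪y, EuclideanSpace.single j (1 : ℝ)⟫ = y j := by
  rw [inner_euclidean]
  rw [Finset.sum_eq_single j]
  · simp
  · intro b _ hb; simp [EuclideanSpace.single_apply, hb]
  · simp

lemma sum_qf_single : ∑ j, qf A (EuclideanSpace.single j (1 : ℝ)) = frobSq A := by
  unfold qf frobSq
  rw [Finset.sum_comm]
  refine Finset.sum_congr rfl fun i _ => Finset.sum_congr rfl fun j _ => ?_
  rw [real_inner_comm, inner_single_right', row_apply]

lemma frob_ge_two (hn : 2 ≤ n) (hA : IsUnit A) : 2 ≤ opNorm A⁻¹ ^ 2 * frobSq A := by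
  have h1 : ∀ j : Fin n, (1 : ℝ) ≤ opNorm A⁻¹ ^ 2 * qf A (EuclideanSpace.single j 1) := by
    intro j
    have := qf_lower A hA (EuclideanSpace.single j (1 : ℝ))
    simpa [EuclideanSpace.norm_single] using this
  calc (2 : ℝ) ≤ (n : ℝ) := by exact_mod_cast hn
    _ = ∑ _j : Fin n, (1 : ℝ) := by simp
    _ ≤ ∑ j : Fin n, opNorm A⁻¹ ^ 2 * qf A (EuclideanSpace.single j 1) :=
        Finset.sum_le_sum fun j _ => h1 j
    _ = opNorm A⁻¹ ^ 2 * frobSq A := by rw [← Finset.mul_sum, sum_qf_single]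

lemma qf_smul (c : ℝ) (y : EuclideanSpace ℝ (Fin n)) : qf A (c • y) = c ^ 2 * qf A y := by
  unfold qf
  rw [Finset.mul_sum]
  exact Finset.sum_congr rfl fun i _ => by rw [real_inner_smul_left]; ring

lemma qf_upper_unit (hn : 2 ≤ n) (hA : IsUnit A) (u : EuclideanSpace ℝ (Fin n))
    (hu : ‖u‖ = 1) : opNorm A⁻¹ ^ 2 * qf A u ≤ opNorm A⁻¹ ^ 2 * frobSq A - 1 := by
  set P : EuclideanSpace ℝ (Fin n) → EuclideanSpace ℝ (Fin n) :=
    fun z => z - ⟪z, u⟫ • u with hP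
  have hP1 : ∀ z, ‖P z‖ ^ 2 = ‖z‖ ^ 2 - ⟪z, u⟫ ^ 2 := by
    intro z
    rw [hP]
    rw [norm_sub_sq_real, real_inner_smul_right, norm_smul, mul_pow]
    rw [hu]
    simp [sq_abs]
    ring
  have hP2 : ∀ z w, ⟪P z, w⟫ = ⟪z, P w⟫ := by
    intro z w
    simp only [hP, inner_sub_left, inner_sub_right, real_inner_smul_left,
      real_inner_smul_right, conj_trivial]
    rw [real_inner_comm u w]
    ring
  have hP3 : ∑ i, ‖P (row A i)‖ ^ 2 = frobSq A - qf A u := by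
    rw [frob_eq]
    unfold qf
    rw [← Finset.sum_sub_distrib]
    exact Finset.sum_congr rfl fun i _ => by rw [hP1, real_inner_comm]
  have hP4 : ∑ i, ‖P (row A i)‖ ^ 2 = ∑ j, qf A (P (EuclideanSpace.single j 1)) := by
    have h1 : ∀ i, ‖P (row A i)‖ ^ 2 = ∑ j, ⟪P (EuclideanSpace.single j 1), row A i⟫ ^ 2 := by
      intro i
      rw [norm_sq_eq]
      refine Finset.sum_congr rfl fun j _ => ?_
      have : P (row A i) j = ⟪P (row A i), EuclideanSpace.single j (1:ℝ)⟫ := by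
        rw [inner_single_right']
      rw [this, hP2, real_inner_comm]
    rw [Finset.sum_congr rfl fun i _ => h1 i, Finset.sum_comm]
    rfl
  have hP5 : ∑ j, ‖P (EuclideanSpace.single j (1:ℝ))‖ ^ 2 = (n : ℝ) - 1 := by
    have h1 : ∀ j, ‖P (EuclideanSpace.single j (1:ℝ))‖ ^ 2 = 1 - (u j) ^ 2 := by
      intro j
      rw [hP1, real_inner_comm, inner_single_right']
      congr 1
      simp [EuclideanSpace.norm_single]
    rw [Finset.sum_congr rfl fun j _ => h1 j, Finset.sum_sub_distrib, ← norm_sq_eq, hu]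
    simp
  have hge : (n : ℝ) - 1 ≤ opNorm A⁻¹ ^ 2 * (frobSq A - qf A u) := by
    calc (n : ℝ) - 1 = ∑ j, ‖P (EuclideanSpace.single j (1:ℝ))‖ ^ 2 := hP5.symm
      _ ≤ ∑ j, opNorm A⁻¹ ^ 2 * qf A (P (EuclideanSpace.single j 1)) :=
          Finset.sum_le_sum fun j _ => qf_lower A hA _
      _ = opNorm A⁻¹ ^ 2 * (frobSq A - qf A u) := by
          rw [← Finset.mul_sum, ← hP4, hP3]
  have hn1 : (1 : ℝ) ≤ (n : ℝ) - 1 := by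
    have : (2 : ℝ) ≤ (n : ℝ) := by exact_mod_cast hn
    linarith
  rw [mul_sub] at hge
  linarith

lemma qf_upper (hn : 2 ≤ n) (hA : IsUnit A) (y : EuclideanSpace ℝ (Fin n)) :
    opNorm A⁻¹ ^ 2 * qf A y ≤ (opNorm A⁻¹ ^ 2 * frobSq A - 1) * ‖y‖ ^ 2 := by
  rcases eq_or_ne y 0 with rfl | hy
  · simp [qf]
  · have hny : ‖y‖ ≠ 0 := norm_ne_zero_iff.mpr hy
    set u : EuclideanSpace ℝ (Fin n) := ‖y‖⁻¹ • y with hu_def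
    have hu : ‖u‖ = 1 := norm_smul_inv_norm hy
    have hyu : y = ‖y‖ • u := by
      rw [hu_def, smul_smul, mul_inv_cancel₀ hny, one_smul]
    have hq : qf A y = ‖y‖ ^ 2 * qf A u := by
      conv_lhs => rw [hyu]
      rw [qf_smul]
    have h := qf_upper_unit A hn hA u hu
    rw [hq]
    nlinarith [sq_nonneg ‖y‖]

lemma TLM_apply (y : EuclideanSpace ℝ (Fin n)) :
    TLM A y = ∑ i, (‖row A i‖ ^ 2 / frobSq A) • reflRow A i y := by
  simp [TLM, LinearMap.sum_apply, reflLM_apply]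

lemma inner_TLM (hn : 2 ≤ n) (hA : IsUnit A) (y : EuclideanSpace ℝ (Fin n)) :
    ⟪y, TLM A y⟫ = ‖y‖ ^ 2 - (2 / frobSq A) * qf A y := by
  have hF := (frob_pos A hn hA).ne'
  rw [TLM_apply, inner_sum]
  have hterm : ∀ i : Fin n, ⟪y, (‖row A i‖ ^ 2 / frobSq A) • reflRow A i y⟫
      = (‖row A i‖ ^ 2 / frobSq A) * ‖y‖ ^ 2 - (2 / frobSq A) * ⟪y, row A i⟫ ^ 2 := by
    intro i
    have hri := (rownormsq_pos A hA i).ne'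
    rw [real_inner_smul_right]
    unfold reflRow
    rw [inner_sub_right, real_inner_smul_right, real_inner_self_eq_norm_sq]
    have hr' : ‖row A i‖ ≠ 0 := fun h => hri (by rw [h]; ring)
    field_simp
  rw [Finset.sum_congr rfl fun i _ => hterm i, Finset.sum_sub_distrib, ← Finset.sum_mul,
    ← Finset.mul_sum]
  have : ∑ i, ‖row A i‖ ^ 2 / frobSq A = 1 := by
    rw [← Finset.sum_div, ← frob_eq, div_self hF]
  rw [this, one_mul]
  rfl

lemma TLM_sa (z w : EuclideanSpace ℝ (Fin n)) : ⟪TLM A z, w⟫ = ⟪z, TLM A w⟫ := by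
  rw [TLM_apply, TLM_apply, sum_inner, inner_sum]
  refine Finset.sum_congr rfl fun i _ => ?_
  unfold reflRow
  rw [real_inner_smul_left, real_inner_smul_right, inner_sub_left, inner_sub_right,
    real_inner_smul_left, real_inner_smul_right, real_inner_comm (row A i) w]
  ring

lemma rayleigh_abs (hn : 2 ≤ n) (hA : IsUnit A) (z : EuclideanSpace ℝ (Fin n)) :
    |⟪z, TLM A z⟫| ≤ (1 - 2 / (opNorm A⁻¹ ^ 2 * frobSq A)) * ‖z‖ ^ 2 := by
  have hF := frob_pos A hn hA
  have hB := opNorm_inv_pos A hn hA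
  have h1 := inner_TLM A hn hA z
  have hlow := qf_lower A hA z
  have hup := qf_upper A hn hA z
  set B := opNorm A⁻¹ with hB_def
  set F := frobSq A with hF_def
  set q := qf A z with hq_def
  have hBF : (0 : ℝ) < B ^ 2 * F := by positivity
  rw [abs_le]
  constructor
  · have key : ⟪z, TLM A z⟫ + (1 - 2 / (B ^ 2 * F)) * ‖z‖ ^ 2
        = (2 / (B ^ 2 * F)) * ((B ^ 2 * F - 1) * ‖z‖ ^ 2 - B ^ 2 * q) := by
      rw [h1]
      field_simp
      ring
    have h2 : (0 : ℝ) ≤ (2 / (B ^ 2 * F)) * ((B ^ 2 * F - 1) * ‖z‖ ^ 2 - B ^ 2 * q) := by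
      apply mul_nonneg (by positivity)
      linarith
    linarith
  · have key : (1 - 2 / (B ^ 2 * F)) * ‖z‖ ^ 2 - ⟪z, TLM A z⟫
        = (2 / (B ^ 2 * F)) * (B ^ 2 * q - ‖z‖ ^ 2) := by
      rw [h1]
      field_simp
      ring
    have h2 : (0 : ℝ) ≤ (2 / (B ^ 2 * F)) * (B ^ 2 * q - ‖z‖ ^ 2) := by
      apply mul_nonneg (by positivity)
      linarith
    linarith

lemma lam_nonneg (hn : 2 ≤ n) (hA : IsUnit A) :
    0 ≤ 1 - 2 / (opNorm A⁻¹ ^ 2 * frobSq A) := by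
  have h2 := frob_ge_two A hn hA
  have : 2 / (opNorm A⁻¹ ^ 2 * frobSq A) ≤ 1 := by
    rw [div_le_one (by linarith)]
    exact h2
  linarith

lemma polar (y z : EuclideanSpace ℝ (Fin n)) :
    4 * ⟪TLM A y, z⟫ = ⟪y + z, TLM A (y + z)⟫ - ⟪y - z, TLM A (y - z)⟫ := by
  simp only [map_add, map_sub, inner_add_left, inner_add_right, inner_sub_left,
    inner_sub_right]
  have e1 : ⟪z, TLM A y⟫ = ⟪TLM A y, z⟫ := real_inner_comm _ _
  have e2 : ⟪y, TLM A z⟫ = ⟪TLM A y, z⟫ := (TLM_sa A y z).symm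
  linarith

lemma TLM_norm_le (hn : 2 ≤ n) (hA : IsUnit A) (y : EuclideanSpace ℝ (Fin n)) :
    ‖TLM A y‖ ≤ (1 - 2 / (opNorm A⁻¹ ^ 2 * frobSq A)) * ‖y‖ := by
  set lam := 1 - 2 / (opNorm A⁻¹ ^ 2 * frobSq A) with hlam
  have hlam0 := lam_nonneg A hn hA
  rcases eq_or_ne (TLM A y) 0 with hTy | hTy
  · rw [hTy, norm_zero]
    exact mul_nonneg hlam0 (norm_nonneg _)
  · have hy : y ≠ 0 := by
      intro h; rw [h, map_zero] at hTy; exact hTy rfl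
    have hny : (0 : ℝ) < ‖y‖ := norm_pos_iff.mpr hy
    have hnTy : (0 : ℝ) < ‖TLM A y‖ := norm_pos_iff.mpr hTy
    set z := (‖y‖ / ‖TLM A y‖) • TLM A y with hz_def
    have hz : ‖z‖ = ‖y‖ := by
      rw [hz_def, norm_smul, Real.norm_eq_abs, abs_of_nonneg (by positivity),
        div_mul_cancel₀ _ hnTy.ne']
    have hip : ⟪TLM A y, z⟫ = ‖y‖ * ‖TLM A y‖ := by
      rw [hz_def, real_inner_smul_right, real_inner_self_eq_norm_sq]
      field_simp
    have hpar : ‖y + z‖ ^ 2 + ‖y - z‖ ^ 2 = 2 * ‖y‖ ^ 2 + 2 * ‖z‖ ^ 2 := by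
      rw [norm_add_sq_real, norm_sub_sq_real]
      ring
    have h1 := rayleigh_abs A hn hA (y + z)
    have h2 := rayleigh_abs A hn hA (y - z)
    rw [abs_le, ← hlam] at h1 h2
    have hp := polar A y z
    have : 4 * (‖y‖ * ‖TLM A y‖) ≤ lam * (2 * ‖y‖ ^ 2 + 2 * ‖z‖ ^ 2) := by
      rw [← hip, ← hpar]
      calc 4 * ⟪TLM A y, z⟫ = ⟪y + z, TLM A (y + z)⟫ - ⟪y - z, TLM A (y - z)⟫ := hp
        _ ≤ lam * ‖y + z‖ ^ 2 + lam * ‖y - z‖ ^ 2 := by linarith [h1.2, h2.1]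
        _ = lam * (‖y + z‖ ^ 2 + ‖y - z‖ ^ 2) := by ring
    rw [hz] at this
    nlinarith

/-- Lemma: `|E⟨x, R^k x⟩| ≤ (1 − 2/(‖A⁻¹‖²·‖A‖_F²))^k · ‖x‖²`. -/
theorem abs_expected_inner_le {n : ℕ} (hn : 2 ≤ n) (A : Matrix (Fin n) (Fin n) ℝ)
    (hA : IsUnit A) (x : EuclideanSpace ℝ (Fin n)) (k : ℕ) :
    |∑ is : Fin k → Fin n, (∏ j, ‖row A (is j)‖ ^ 2 / frobSq A) * ⟪x, applySeq A k is x⟫|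
      ≤ (1 - 2 / (opNorm A⁻¹ ^ 2 * frobSq A)) ^ k * ‖x‖ ^ 2 := by
  have hsum : ∑ is : Fin k → Fin n,
      (∏ j, ‖row A (is j)‖ ^ 2 / frobSq A) * ⟪x, applySeq A k is x⟫
      = ⟪x, ((TLM A) ^ k) x⟫ := by
    rw [← sum_applySeq A k x, inner_sum]
    exact Finset.sum_congr rfl fun is _ => (real_inner_smul_right x _ _).symm
  rw [hsum]
  clear hsum
  set lam := 1 - 2 / (opNorm A⁻¹ ^ 2 * frobSq A) with hlam
  have hlam0 : 0 ≤ lam := lam_nonneg A hn hA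
  have hpow : ‖((TLM A) ^ k) x‖ ≤ lam ^ k * ‖x‖ := by
    induction k with
    | zero => simp
    | succ k ih =>
      rw [pow_succ', Module.End.mul_apply]
      calc ‖TLM A (((TLM A) ^ k) x)‖ ≤ lam * ‖((TLM A) ^ k) x‖ := by
            rw [hlam]; exact TLM_norm_le A hn hA _
        _ ≤ lam * (lam ^ k * ‖x‖) := mul_le_mul_of_nonneg_left ih hlam0
        _ = lam ^ (k + 1) * ‖x‖ := by ring
  calc |⟪x, ((TLM A) ^ k) x⟫| ≤ ‖x‖ * ‖((TLM A) ^ k) x‖ := abs_real_inner_le_norm _ _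
    _ ≤ ‖x‖ * (lam ^ k * ‖x‖) := mul_le_mul_of_nonneg_left hpow (norm_nonneg x)
    _ = lam ^ k * ‖x‖ ^ 2 := by ring
end

section
/- Let A be an invertible n×n real matrix with n ≥ 2 and rows a₁,…,aₙ. For x ∈ ℝⁿ and m ∈ ℕ, consider the random sequence y₁ = x, y_{k+1} = R_{i_k} y_k, where i₁, i₂, … are independent indices with P(i = j) = ‖a_j‖²/‖A‖_F² and R_j y = y − 2·(⟨y, a_j⟩/‖a_j‖²)·a_j. Then E‖ Σ_{k=1}^{m} y_k ‖² ≤ m·‖x‖²·(1 + ‖A‖_F²·‖A⁻¹‖²), where the expectation is the sum over all index sequences (i₁,…,i_{m−1}) ∈ {1,…,n}^{m−1} weighted by the product of the probabilities. -/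
open scoped RealInnerProductSpace
open Finset

namespace KX
variable {n : ℕ} (A : Matrix (Fin n) (Fin n) ℝ)

noncomputable def p (i : Fin n) : ℝ := ‖row A i‖ ^ 2 / frobSq A

lemma frobSq_eq : frobSq A = ∑ i, ‖row A i‖ ^ 2 := by
  unfold frobSq
  refine Finset.sum_congr rfl fun i _ => ?_
  rw [EuclideanSpace.norm_eq]
  rw [Real.sq_sqrt (by positivity)]
  refine Finset.sum_congr rfl fun j _ => ?_
  simp [row, Real.norm_eq_abs, sq_abs]

lemma frobSq_nonneg : 0 ≤ frobSq A := by
  unfold frobSq; positivity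

lemma frobSq_pos (hn : 0 < n) (hA : IsUnit A) : 0 < frobSq A := by
  rcases (frobSq_nonneg A).lt_or_eq with h | h
  · exact h
  · exfalso
    have hz : A = 0 := by
      ext i j
      have h1 : ∀ i ∈ (univ : Finset (Fin n)), 0 ≤ ∑ j, (A i j)^2 := by
        intro i _; positivity
      have := (Finset.sum_eq_zero_iff_of_nonneg h1).mp h.symm i (mem_univ i)
      have h2 : ∀ j ∈ (univ : Finset (Fin n)), 0 ≤ (A i j)^2 := by intro j _; positivity
      have := (Finset.sum_eq_zero_iff_of_nonneg h2).mp this j (mem_univ j)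
      simpa [pow_eq_zero_iff] using this
    rw [hz] at hA
    rw [Matrix.isUnit_iff_isUnit_det] at hA
    have hne : Nonempty (Fin n) := ⟨⟨0, hn⟩⟩
    rw [Matrix.det_zero] at hA
    simpa using hA

lemma p_nonneg (i : Fin n) : 0 ≤ p A i := by
  unfold p
  have := frobSq_nonneg A
  positivity

lemma sum_p (hF : 0 < frobSq A) : ∑ i, p A i = 1 := by
  unfold p
  rw [← Finset.sum_div, ← frobSq_eq, div_self hF.ne']

lemma norm_reflRow (i : Fin n) (y : EuclideanSpace ℝ (Fin n)) :
    ‖reflRow A i y‖ = ‖y‖ := by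
  by_cases h : row A i = 0
  · simp [reflRow, h]
  · have hr : ‖row A i‖ ≠ 0 := norm_ne_zero_iff.mpr h
    have : ‖reflRow A i y‖ ^ 2 = ‖y‖ ^ 2 := by
      rw [reflRow, norm_sub_sq_real, real_inner_smul_right, norm_smul,
        Real.norm_eq_abs, mul_pow, sq_abs]
      field_simp
      ring
    have h1 : (0:ℝ) ≤ ‖reflRow A i y‖ := norm_nonneg _
    have h2 : (0:ℝ) ≤ ‖y‖ := norm_nonneg _
    nlinarith

lemma norm_applySeq (k : ℕ) (is : Fin k → Fin n) (x : EuclideanSpace ℝ (Fin n)) :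
    ‖applySeq A k is x‖ = ‖x‖ := by
  induction k with
  | zero => rfl
  | succ k ih => rw [applySeq, norm_reflRow, ih]


noncomputable def T : EuclideanSpace ℝ (Fin n) →ₗ[ℝ] EuclideanSpace ℝ (Fin n) where
  toFun v := ∑ i, ⟪v, row A i⟫ • row A i
  map_add' u v := by
    simp [inner_add_left, add_smul, Finset.sum_add_distrib]
  map_smul' c v := by
    simp only [real_inner_smul_left, RingHom.id_apply, Finset.smul_sum]
    refine Finset.sum_congr rfl fun i _ => ?_
    rw [smul_smul]

noncomputable def B : EuclideanSpace ℝ (Fin n) →ₗ[ℝ] EuclideanSpace ℝ (Fin n) :=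
  LinearMap.id - (2 / frobSq A) • T A

lemma T_symm : (T A).IsSymmetric := by
  intro u v
  simp only [T, LinearMap.coe_mk, AddHom.coe_mk, sum_inner, inner_sum,
    real_inner_smul_left, real_inner_smul_right]
  refine Finset.sum_congr rfl fun i _ => ?_
  rw [real_inner_comm (row A i) v]
  ring

lemma B_symm : (B A).IsSymmetric := by
  intro u v
  simp only [B, LinearMap.sub_apply, LinearMap.id_apply, LinearMap.smul_apply,
    inner_sub_left, inner_sub_right, real_inner_smul_left, real_inner_smul_right]
  rw [T_symm A u v]

lemma avg (hF : 0 < frobSq A) (v : EuclideanSpace ℝ (Fin n)) :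
    ∑ i, p A i • reflRow A i v = B A v := by
  have key : ∀ i, p A i • reflRow A i v
      = p A i • v - (2 / frobSq A) • (⟪v, row A i⟫ • row A i) := by
    intro i
    by_cases h : row A i = 0
    · simp [reflRow, h]
    · have hr : ‖row A i‖ ≠ 0 := norm_ne_zero_iff.mpr h
      rw [reflRow, smul_sub, smul_smul, smul_smul]
      have hc : p A i * (2 * (⟪v, row A i⟫ / ‖row A i‖ ^ 2))
          = 2 / frobSq A * ⟪v, row A i⟫ := by
        unfold p; field_simp
      rw [hc]
  rw [Finset.sum_congr rfl fun i _ => key i, Finset.sum_sub_distrib,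
    ← Finset.sum_smul, sum_p A hF, one_smul, ← Finset.smul_sum]
  rfl

lemma sum_snoc {M : Type*} [AddCommMonoid M] (t : ℕ) (f : (Fin (t+1) → Fin n) → M) :
    ∑ is : Fin (t+1) → Fin n, f is
      = ∑ is : Fin t → Fin n, ∑ i : Fin n, f (Fin.snoc is i) := by
  calc ∑ is : Fin (t+1) → Fin n, f is
      = ∑ q : (Fin t → Fin n) × Fin n, f (Fin.snoc q.1 q.2) :=
        (Fintype.sum_equiv
          (⟨fun q => Fin.snoc q.1 q.2,
            fun is => (fun j => is j.castSucc, is (Fin.last t)),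
            fun q => by simp,
            fun is => Fin.snoc_init_self is⟩ :
              ((Fin t → Fin n) × Fin n) ≃ (Fin (t+1) → Fin n))
          (fun q => f (Fin.snoc q.1 q.2)) f (fun q => rfl)).symm
    _ = _ := Fintype.sum_prod_type _

lemma drop (hF : 0 < frobSq A) (N r : ℕ) (h : r ≤ N) (f : (Fin r → Fin n) → ℝ) :
    ∑ is : Fin N → Fin n, (∏ j, p A (is j)) * f (fun j => is (Fin.castLE h j))
      = ∑ is : Fin r → Fin n, (∏ j, p A (is j)) * f is := by
  induction N with
  | zero =>
    obtain rfl : r = 0 := Nat.le_zero.mp h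
    rfl
  | succ N ih =>
    rcases Nat.lt_or_ge r (N+1) with h' | h'
    · have hr : r ≤ N := by omega
      rw [sum_snoc]
      have step : ∀ (is : Fin N → Fin n) (i : Fin n),
          (∏ j, p A ((Fin.snoc is i : Fin (N+1) → Fin n) j)) *
            f (fun j => (Fin.snoc is i : Fin (N+1) → Fin n) (Fin.castLE h j))
          = ((∏ j, p A (is j)) * f (fun j => is (Fin.castLE hr j))) * p A i := by
        intro is i
        rw [Fin.prod_univ_castSucc]
        have h1 : (fun j : Fin r => (Fin.snoc is i : Fin (N+1) → Fin n) (Fin.castLE h j))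
            = fun j => is (Fin.castLE hr j) := by
          funext j
          have h2 : Fin.castLE h j = Fin.castSucc (Fin.castLE hr j) := rfl
          rw [h2, Fin.snoc_castSucc]
        simp only [Fin.snoc_castSucc, Fin.snoc_last, h1]
        ring
      calc ∑ is : Fin N → Fin n, ∑ i : Fin n,
            (∏ j, p A ((Fin.snoc is i : Fin (N+1) → Fin n) j)) *
              f (fun j => (Fin.snoc is i : Fin (N+1) → Fin n) (Fin.castLE h j))
          = ∑ is : Fin N → Fin n,
            (∏ j, p A (is j)) * f (fun j => is (Fin.castLE hr j)) := by
            refine Finset.sum_congr rfl fun is _ => ?_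
            rw [Finset.sum_congr rfl fun i _ => step is i, ← Finset.mul_sum,
              sum_p A hF, mul_one]
        _ = _ := ih hr
    · obtain rfl : r = N + 1 := by omega
      rfl


lemma cross (hF : 0 < frobSq A) (k : ℕ) (x : EuclideanSpace ℝ (Fin n)) :
    ∀ (t s : ℕ),
    ∑ is : Fin (k + t) → Fin n, (∏ j, p A (is j)) *
        ⟪applySeq A k (fun j => is (Fin.castLE (Nat.le_add_right k t) j)) x,
          ((B A) ^ s) (applySeq A (k + t) is x)⟫
      = ∑ is : Fin k → Fin n, (∏ j, p A (is j)) *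
          ⟪applySeq A k is x, ((B A) ^ (s + t)) (applySeq A k is x)⟫ := by
  intro t
  induction t with
  | zero => intro s; rfl
  | succ t ih =>
    intro s
    refine (sum_snoc (k + t) _).trans ?_
    have step : ∀ (is : Fin (k + t) → Fin n) (i : Fin n),
        (∏ j, p A ((Fin.snoc is i : Fin (k + t + 1) → Fin n) j)) *
          ⟪applySeq A k (fun j => (Fin.snoc is i : Fin (k + t + 1) → Fin n)
              (Fin.castLE (Nat.le_add_right k (t+1)) j)) x,
            ((B A) ^ s) (applySeq A (k + t + 1) (Fin.snoc is i) x)⟫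
        = ((∏ j, p A (is j)) *
            (p A i * ⟪applySeq A k (fun j => is (Fin.castLE (Nat.le_add_right k t) j)) x,
              ((B A) ^ s) (reflRow A i (applySeq A (k + t) is x))⟫)) := by
      intro is i
      rw [Fin.prod_univ_castSucc]
      have h1 : (fun j : Fin k => (Fin.snoc is i : Fin (k + t + 1) → Fin n)
          (Fin.castLE (Nat.le_add_right k (t+1)) j))
          = fun j => is (Fin.castLE (Nat.le_add_right k t) j) := by
        funext j
        have h2 : Fin.castLE (Nat.le_add_right k (t+1)) j
            = Fin.castSucc (Fin.castLE (Nat.le_add_right k t) j) := rfl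
        rw [h2, Fin.snoc_castSucc]
      have h4 : (fun j : Fin (k+t) => (Fin.snoc is i : Fin (k+t+1) → Fin n) j.castSucc) = is := by
        funext j; exact Fin.snoc_castSucc _ _ _
      have h3 : applySeq A (k + t + 1) (Fin.snoc is i) x
          = reflRow A i (applySeq A (k + t) is x) := by
        show reflRow A ((Fin.snoc is i : Fin (k+t+1) → Fin n) (Fin.last (k+t)))
          (applySeq A (k+t) (fun j => (Fin.snoc is i : Fin (k+t+1) → Fin n) j.castSucc) x) = _
        rw [h4, Fin.snoc_last]
      simp only [Fin.snoc_castSucc, Fin.snoc_last, h1, h3]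
      ring
    calc ∑ is : Fin (k+t) → Fin n, ∑ i : Fin n,
          (∏ j, p A ((Fin.snoc is i : Fin (k + t + 1) → Fin n) j)) *
            ⟪applySeq A k (fun j => (Fin.snoc is i : Fin (k + t + 1) → Fin n)
                (Fin.castLE (Nat.le_add_right k (t+1)) j)) x,
              ((B A) ^ s) (applySeq A (k + t + 1) (Fin.snoc is i) x)⟫
        = ∑ is : Fin (k+t) → Fin n, (∏ j, p A (is j)) *
            ⟪applySeq A k (fun j => is (Fin.castLE (Nat.le_add_right k t) j)) x,
              ((B A) ^ (s+1)) (applySeq A (k + t) is x)⟫ := by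
          refine Finset.sum_congr rfl fun is _ => ?_
          rw [Finset.sum_congr rfl fun i _ => step is i, ← Finset.mul_sum]
          congr 1
          have : ∀ i : Fin n,
              p A i * ⟪applySeq A k (fun j => is (Fin.castLE (Nat.le_add_right k t) j)) x,
                ((B A) ^ s) (reflRow A i (applySeq A (k + t) is x))⟫
              = ⟪applySeq A k (fun j => is (Fin.castLE (Nat.le_add_right k t) j)) x,
                ((B A) ^ s) (p A i • reflRow A i (applySeq A (k + t) is x))⟫ := by
            intro i
            rw [map_smul, real_inner_smul_right]
          rw [Finset.sum_congr rfl fun i _ => this i, ← inner_sum, ← map_sum,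
            avg A hF, ← Module.End.mul_apply, ← pow_succ]
        _ = _ := by
          rw [ih (s+1), show s+1+t = s+(t+1) from by omega]


/-- `⟪v, T v⟫ = ∑ ⟪v,aᵢ⟫²`. -/
lemma inner_T (v : EuclideanSpace ℝ (Fin n)) :
    ⟪v, T A v⟫ = ∑ i, ⟪v, row A i⟫ ^ 2 := by
  simp only [T, LinearMap.coe_mk, AddHom.coe_mk, inner_sum, real_inner_smul_right]
  refine Finset.sum_congr rfl fun i _ => ?_
  rw [real_inner_comm]
  ring

lemma inner_T_eq_norm (v : EuclideanSpace ℝ (Fin n)) :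
    ⟪v, T A v⟫ = ‖Matrix.toEuclideanCLM (𝕜 := ℝ) A v‖ ^ 2 := by
  rw [inner_T, ← real_inner_self_eq_norm_sq]
  rw [PiLp.inner_apply]
  refine Finset.sum_congr rfl fun i _ => ?_
  have hw : ∀ i, (Matrix.toEuclideanCLM (𝕜 := ℝ) A v) i = ∑ j, A i j * v j := by
    intro i
    have := Matrix.ofLp_toEuclideanCLM (𝕜 := ℝ) A v
    calc (Matrix.toEuclideanCLM (𝕜 := ℝ) A v) i
        = (WithLp.equiv 2 (Fin n → ℝ) (Matrix.toEuclideanCLM (𝕜 := ℝ) A v)) i := rfl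
      _ = (A.mulVec (WithLp.equiv 2 (Fin n → ℝ) v)) i := congrFun this i
      _ = ∑ j, A i j * v j := rfl
  have hr : ⟪v, row A i⟫ = ∑ j, A i j * v j := by
    rw [PiLp.inner_apply]
    refine Finset.sum_congr rfl fun j _ => ?_
    simp [row, RCLike.inner_apply, starRingEnd_apply, mul_comm]
  rw [hw, hr]
  simp [RCLike.inner_apply, starRingEnd_apply]

lemma inner_T_le (v : EuclideanSpace ℝ (Fin n)) :
    ⟪v, T A v⟫ ≤ frobSq A * ‖v‖ ^ 2 := by
  rw [inner_T, frobSq_eq, Finset.sum_mul]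
  refine Finset.sum_le_sum fun i _ => ?_
  have h := abs_real_inner_le_norm v (row A i)
  nlinarith [sq_abs (⟪v, row A i⟫), abs_nonneg (⟪v, row A i⟫), norm_nonneg v,
    norm_nonneg (row A i), mul_nonneg (norm_nonneg v) (norm_nonneg (row A i))]

lemma inner_T_ge (hA : IsUnit A) (v : EuclideanSpace ℝ (Fin n)) :
    ‖v‖ ^ 2 ≤ opNorm A⁻¹ ^ 2 * ⟪v, T A v⟫ := by
  have hdet : IsUnit A.det := (Matrix.isUnit_iff_isUnit_det A).mp hA
  have hv : Matrix.toEuclideanCLM (𝕜 := ℝ) A⁻¹ (Matrix.toEuclideanCLM (𝕜 := ℝ) A v) = v := by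
    rw [← ContinuousLinearMap.comp_apply, ← ContinuousLinearMap.mul_def, ← map_mul,
      Matrix.nonsing_inv_mul A hdet]
    simp
  have hb : ‖v‖ ≤ opNorm A⁻¹ * ‖Matrix.toEuclideanCLM (𝕜 := ℝ) A v‖ := by
    conv_lhs => rw [← hv]
    exact (Matrix.toEuclideanCLM (𝕜 := ℝ) A⁻¹).le_opNorm _
  rw [inner_T_eq_norm]
  have h1 : (0:ℝ) ≤ ‖v‖ := norm_nonneg _
  have h2 : (0:ℝ) ≤ opNorm A⁻¹ := norm_nonneg _
  nlinarith [norm_nonneg (Matrix.toEuclideanCLM (𝕜 := ℝ) A v)]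

lemma opNorm_inv_pos (hn : 0 < n) (hA : IsUnit A) : 0 < opNorm A⁻¹ := by
  have hdet : IsUnit A.det := (Matrix.isUnit_iff_isUnit_det A).mp hA
  have hne : A⁻¹ ≠ 0 := by
    intro h
    have h1 : (1 : Matrix (Fin n) (Fin n) ℝ) = 0 := by
      rw [← Matrix.nonsing_inv_mul A hdet, h, zero_mul]
    have := congrFun (congrFun h1 ⟨0, hn⟩) ⟨0, hn⟩
    simp [Matrix.one_apply] at this
  rw [opNorm, norm_pos_iff]
  intro h
  apply hne
  apply (Matrix.toEuclideanCLM (𝕜 := ℝ) (n := Fin n)).injective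
  show Matrix.toEuclideanCLM (𝕜 := ℝ) A⁻¹ = Matrix.toEuclideanCLM (𝕜 := ℝ) 0
  rw [h, map_zero]

/-- scalar geometric bound -/
lemma scalar_bound (FK : ℝ) (hFK : 0 < FK) (μ : ℝ) (h1 : -1 ≤ μ)
    (h2 : 2 / FK ≤ 1 - μ) (s : ℕ) :
    ∑ t ∈ Finset.range s, μ ^ (t + 1) ≤ FK / 2 := by
  have hd : 0 < 2 / FK := by positivity
  have hμ1 : μ < 1 := by linarith
  have habs : |μ| ≤ 1 := abs_le.mpr ⟨h1, hμ1.le⟩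
  set S := ∑ t ∈ Finset.range s, μ ^ (t + 1) with hS
  have hgeo : (1 - μ) * S = μ - μ ^ (s + 1) := by
    have h3 : S = μ * ∑ t ∈ Finset.range s, μ ^ t := by
      rw [Finset.mul_sum]
      exact Finset.sum_congr rfl fun t _ => (pow_succ' μ t)
    have h4 := geom_sum_mul μ s
    calc (1 - μ) * S = -(μ * ((∑ t ∈ Finset.range s, μ ^ t) * (μ - 1))) := by rw [h3]; ring
      _ = -(μ * (μ ^ s - 1)) := by rw [h4]
      _ = μ - μ ^ (s + 1) := by rw [pow_succ' μ s]; ring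
  have hnum : μ - μ ^ (s + 1) ≤ 1 := by
    have hps : |μ ^ s| ≤ 1 := by
      rw [abs_pow]; exact pow_le_one₀ (abs_nonneg μ) habs
    have hps' := abs_le.mp hps
    have : μ - μ ^ (s + 1) = μ * (1 - μ ^ s) := by rw [pow_succ' μ s]; ring
    rw [this]
    rcases le_or_gt 0 μ with hm | hm
    · have hps0 : 0 ≤ μ ^ s := pow_nonneg hm s
      nlinarith
    · nlinarith
  rcases le_or_gt S 0 with hs0 | hs0
  · have h6 : (0:ℝ) ≤ FK / 2 := by positivity
    linarith
  · have h5 : (2 / FK) * S ≤ (1 - μ) * S := mul_le_mul_of_nonneg_right h2 hs0.le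
    rw [hgeo] at h5
    have h7 : (2 / FK) * S ≤ 1 := le_trans h5 hnum
    rw [div_mul_eq_mul_div, div_le_one hFK] at h7
    linarith

lemma eigen_facts (hn : 0 < n) (hA : IsUnit A) :
    ∀ i : Fin n,
      -1 ≤ (B_symm A).eigenvalues finrank_euclideanSpace_fin i ∧
      2 / (frobSq A * opNorm A⁻¹ ^ 2)
        ≤ 1 - (B_symm A).eigenvalues finrank_euclideanSpace_fin i := by
  intro i
  have hF : 0 < frobSq A := frobSq_pos A hn hA
  have hK : 0 < opNorm A⁻¹ ^ 2 := pow_pos (opNorm_inv_pos A hn hA) 2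
  set b := (B_symm A).eigenvectorBasis finrank_euclideanSpace_fin with hb
  set μ := (B_symm A).eigenvalues finrank_euclideanSpace_fin with hμ
  have hbi : ‖b i‖ = 1 := b.orthonormal.1 i
  have happ : B A (b i) = μ i • b i := by
    exact_mod_cast (B_symm A).apply_eigenvectorBasis finrank_euclideanSpace_fin i
  have hray : μ i = 1 - (2 / frobSq A) * ⟪b i, T A (b i)⟫ := by
    have h1 : ⟪b i, B A (b i)⟫ = μ i := by
      rw [happ, real_inner_smul_right, real_inner_self_eq_norm_sq, hbi]
      ring
    rw [← h1]
    simp only [B, LinearMap.sub_apply, LinearMap.id_apply, LinearMap.smul_apply,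
      inner_sub_right, real_inner_smul_right, real_inner_self_eq_norm_sq, hbi]
    ring
  have hQle : ⟪b i, T A (b i)⟫ ≤ frobSq A := by
    have := inner_T_le A (b i)
    rw [hbi] at this; simpa using this
  have hQge : 1 ≤ opNorm A⁻¹ ^ 2 * ⟪b i, T A (b i)⟫ := by
    have := inner_T_ge A hA (b i)
    rw [hbi] at this; simpa using this
  constructor
  · rw [hray]
    have h2 : (2 / frobSq A) * ⟪b i, T A (b i)⟫ ≤ 2 := by
      rw [div_mul_eq_mul_div, div_le_iff₀ hF]
      nlinarith
    linarith
  · rw [hray]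
    have hQpos : 0 < ⟪b i, T A (b i)⟫ := by nlinarith
    rw [div_le_iff₀ (by positivity)]
    have expand : (1 - (1 - 2 / frobSq A * ⟪b i, T A (b i)⟫))
        * (frobSq A * opNorm A⁻¹ ^ 2)
        = 2 * (opNorm A⁻¹ ^ 2 * ⟪b i, T A (b i)⟫) := by
      field_simp
      ring
    rw [expand]
    linarith

/-- the crucial geometric-sum spectral bound -/
lemma geom_bound (hn : 0 < n) (hA : IsUnit A) (s : ℕ) (z : EuclideanSpace ℝ (Fin n)) :
    ∑ t ∈ Finset.range s, ⟪z, ((B A) ^ (t + 1)) z⟫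
      ≤ (frobSq A * opNorm A⁻¹ ^ 2 / 2) * ‖z‖ ^ 2 := by
  have hF : 0 < frobSq A := frobSq_pos A hn hA
  have hK : 0 < opNorm A⁻¹ := opNorm_inv_pos A hn hA
  set b := (B_symm A).eigenvectorBasis finrank_euclideanSpace_fin with hb
  set μ := (B_symm A).eigenvalues finrank_euclideanSpace_fin with hμ
  have hpow : ∀ (q : ℕ) (i : Fin n), ((B A) ^ q) (b i) = (μ i ^ q) • b i := by
    intro q i
    induction q with
    | zero => simp
    | succ q ih =>
      rw [pow_succ, Module.End.mul_apply]
      have happ : B A (b i) = μ i • b i := by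
        exact_mod_cast (B_symm A).apply_eigenvectorBasis finrank_euclideanSpace_fin i
      rw [happ, map_smul, ih, smul_smul, pow_succ]
      ring_nf
  have hexp : ∀ q : ℕ, ⟪z, ((B A) ^ q) z⟫ = ∑ i, μ i ^ q * (b.repr z i) ^ 2 := by
    intro q
    rw [← b.repr.inner_map_map z (((B A) ^ q) z), PiLp.inner_apply]
    refine Finset.sum_congr rfl fun i _ => ?_
    have hrepr : b.repr (((B A) ^ q) z) i = μ i ^ q * b.repr z i := by
      rw [OrthonormalBasis.repr_apply_apply, OrthonormalBasis.repr_apply_apply,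
        ← ((B_symm A).pow q) (b i) z, hpow q i, real_inner_smul_left]
    rw [hrepr]
    simp [RCLike.inner_apply, starRingEnd_apply]
    ring
  have hnorm : ∑ i, (b.repr z i) ^ 2 = ‖z‖ ^ 2 := by
    have := hexp 0
    simp only [pow_zero, one_mul, Module.End.one_apply] at this
    rw [← real_inner_self_eq_norm_sq, this]
  calc ∑ t ∈ Finset.range s, ⟪z, ((B A) ^ (t + 1)) z⟫
      = ∑ t ∈ Finset.range s, ∑ i, μ i ^ (t + 1) * (b.repr z i) ^ 2 := by
        exact Finset.sum_congr rfl fun t _ => hexp (t + 1)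
    _ = ∑ i, (∑ t ∈ Finset.range s, μ i ^ (t + 1)) * (b.repr z i) ^ 2 := by
        rw [Finset.sum_comm]
        exact Finset.sum_congr rfl fun i _ => (Finset.sum_mul _ _ _).symm
    _ ≤ ∑ i, (frobSq A * opNorm A⁻¹ ^ 2 / 2) * (b.repr z i) ^ 2 := by
        refine Finset.sum_le_sum fun i _ => ?_
        refine mul_le_mul_of_nonneg_right ?_ (by positivity)
        obtain ⟨he1, he2⟩ := eigen_facts A hn hA i
        exact scalar_bound (frobSq A * opNorm A⁻¹ ^ 2) (by positivity) (μ i) he1 he2 s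
    _ = (frobSq A * opNorm A⁻¹ ^ 2 / 2) * ‖z‖ ^ 2 := by
        rw [← Finset.mul_sum, hnorm]


lemma weight_sum (hF : 0 < frobSq A) (k : ℕ) :
    ∑ is : Fin k → Fin n, ∏ j, p A (is j) = 1 := by
  induction k with
  | zero => simp
  | succ k ih =>
    rw [sum_snoc]
    calc ∑ is : Fin k → Fin n, ∑ i : Fin n, ∏ j, p A ((Fin.snoc is i : Fin (k+1) → Fin n) j)
        = ∑ is : Fin k → Fin n, (∏ j, p A (is j)) := by
          refine Finset.sum_congr rfl fun is _ => ?_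
          have : ∀ i : Fin n, (∏ j, p A ((Fin.snoc is i : Fin (k+1) → Fin n) j))
              = (∏ j, p A (is j)) * p A i := by
            intro i
            rw [Fin.prod_univ_castSucc]
            simp [Fin.snoc_castSucc, Fin.snoc_last]
          rw [Finset.sum_congr rfl fun i _ => this i, ← Finset.mul_sum, sum_p A hF, mul_one]
      _ = 1 := ih

lemma crossK (hF : 0 < frobSq A) (k l : ℕ) (h : k ≤ l) (x : EuclideanSpace ℝ (Fin n)) :
    ∑ is : Fin l → Fin n, (∏ j, p A (is j)) *
        ⟪applySeq A k (fun j => is (Fin.castLE h j)) x, applySeq A l is x⟫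
      = ∑ is : Fin k → Fin n, (∏ j, p A (is j)) *
          ⟪applySeq A k is x, ((B A) ^ (l - k)) (applySeq A k is x)⟫ := by
  obtain ⟨t, rfl⟩ : ∃ t, l = k + t := ⟨l - k, by omega⟩
  have h0 := cross A hF k x t 0
  simp only [pow_zero, Module.End.one_apply] at h0
  rw [show k + t - k = t from by omega, show (0:ℕ) + t = t from by omega] at *
  exact h0

/-- the (k,l) cross-correlation term -/
noncomputable def Cc (x : EuclideanSpace ℝ (Fin n)) (m : ℕ) (k l : Fin m) : ℝ :=
  ∑ is : Fin (m-1) → Fin n, (∏ j, p A (is j)) *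
    ⟪applySeq A k.val (fun j => is (Fin.castLE (by have := k.isLt; omega) j)) x,
     applySeq A l.val (fun j => is (Fin.castLE (by have := l.isLt; omega) j)) x⟫

lemma Cc_symm (x : EuclideanSpace ℝ (Fin n)) (m : ℕ) (k l : Fin m) :
    Cc A x m k l = Cc A x m l k := by
  unfold Cc
  exact Finset.sum_congr rfl fun is _ => by rw [real_inner_comm]

lemma Cc_diag (hF : 0 < frobSq A) (x : EuclideanSpace ℝ (Fin n)) (m : ℕ) (k : Fin m) :
    Cc A x m k k = ‖x‖ ^ 2 := by
  unfold Cc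
  calc ∑ is : Fin (m-1) → Fin n, (∏ j, p A (is j)) *
        ⟪applySeq A k.val (fun j => is (Fin.castLE (by have := k.isLt; omega) j)) x,
         applySeq A k.val (fun j => is (Fin.castLE (by have := k.isLt; omega) j)) x⟫
      = ∑ is : Fin (m-1) → Fin n, (∏ j, p A (is j)) * ‖x‖ ^ 2 := by
        refine Finset.sum_congr rfl fun is _ => ?_
        rw [real_inner_self_eq_norm_sq, norm_applySeq]
    _ = ‖x‖ ^ 2 := by rw [← Finset.sum_mul, weight_sum A hF, one_mul]

lemma Cc_lt (hF : 0 < frobSq A) (x : EuclideanSpace ℝ (Fin n)) (m : ℕ) (k l : Fin m)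
    (hkl : k ≤ l) :
    Cc A x m k l = ∑ is : Fin k.val → Fin n, (∏ j, p A (is j)) *
        ⟪applySeq A k.val is x, ((B A) ^ (l.val - k.val)) (applySeq A k.val is x)⟫ := by
  have hlN : l.val ≤ m - 1 := by have := l.isLt; omega
  have h1 := drop A hF (m-1) l.val hlN
    (fun is => ⟪applySeq A k.val (fun j => is (Fin.castLE hkl j)) x, applySeq A l.val is x⟫)
  calc Cc A x m k l
      = ∑ is : Fin l.val → Fin n, (∏ j, p A (is j)) *
          ⟪applySeq A k.val (fun j => is (Fin.castLE hkl j)) x, applySeq A l.val is x⟫ := h1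
    _ = _ := crossK A hF k.val l.val hkl x
lemma cross_sum_bound (hn : 0 < n) (hA : IsUnit A) (x : EuclideanSpace ℝ (Fin n))
    (m : ℕ) (k : Fin m) :
    ∑ l ∈ univ.filter (fun l => k < l), Cc A x m k l
      ≤ frobSq A * opNorm A⁻¹ ^ 2 / 2 * ‖x‖ ^ 2 := by
  have hF : 0 < frobSq A := frobSq_pos A hn hA
  have h1 : ∀ l ∈ univ.filter (fun l => k < l), Cc A x m k l
      = ∑ is : Fin k.val → Fin n, (∏ j, p A (is j)) *
          ⟪applySeq A k.val is x, ((B A) ^ (l.val - k.val)) (applySeq A k.val is x)⟫ := by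
    intro l hl
    rw [Finset.mem_filter] at hl
    exact Cc_lt A hF x m k l (le_of_lt hl.2)
  rw [Finset.sum_congr rfl h1]
  have hre : ∑ l ∈ univ.filter (fun l => k < l),
        (∑ is : Fin k.val → Fin n, (∏ j, p A (is j)) *
          ⟪applySeq A k.val is x, ((B A) ^ (l.val - k.val)) (applySeq A k.val is x)⟫)
      = ∑ t ∈ Finset.range (m - 1 - k.val),
        (∑ is : Fin k.val → Fin n, (∏ j, p A (is j)) *
          ⟪applySeq A k.val is x, ((B A) ^ (t + 1)) (applySeq A k.val is x)⟫) := by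
    refine Finset.sum_nbij' (fun l => l.val - k.val - 1)
      (fun t => if h : k.val + t + 1 < m then (⟨k.val + t + 1, h⟩ : Fin m) else k)
      ?_ ?_ ?_ ?_ ?_
    · intro l hl
      rw [Finset.mem_filter, Fin.lt_def] at hl
      rw [Finset.mem_range]
      have := l.isLt
      omega
    · intro t ht
      rw [Finset.mem_range] at ht
      have hlt : k.val + t + 1 < m := by have := k.isLt; omega
      rw [dif_pos hlt, Finset.mem_filter, Fin.lt_def]
      exact ⟨Finset.mem_univ _, by show k.val < k.val + t + 1; omega⟩
    · intro l hl
      rw [Finset.mem_filter, Fin.lt_def] at hl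
      have hlt : k.val + (l.val - k.val - 1) + 1 < m := by have := l.isLt; omega
      rw [dif_pos hlt]
      apply Fin.ext
      simp
      omega
    · intro t ht
      rw [Finset.mem_range] at ht
      have hlt : k.val + t + 1 < m := by have := k.isLt; omega
      rw [dif_pos hlt]
      simp
      omega
    · intro l hl
      rw [Finset.mem_filter, Fin.lt_def] at hl
      have he : (l.val - k.val - 1) + 1 = l.val - k.val := by omega
      rw [he]
  rw [hre]
  calc ∑ t ∈ Finset.range (m - 1 - k.val),
        (∑ is : Fin k.val → Fin n, (∏ j, p A (is j)) *
          ⟪applySeq A k.val is x, ((B A) ^ (t + 1)) (applySeq A k.val is x)⟫)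
      = ∑ is : Fin k.val → Fin n, (∏ j, p A (is j)) *
          ∑ t ∈ Finset.range (m - 1 - k.val),
            ⟪applySeq A k.val is x, ((B A) ^ (t + 1)) (applySeq A k.val is x)⟫ := by
        rw [Finset.sum_comm]
        exact Finset.sum_congr rfl fun is _ => (Finset.mul_sum _ _ _).symm
    _ ≤ ∑ is : Fin k.val → Fin n, (∏ j, p A (is j)) *
          (frobSq A * opNorm A⁻¹ ^ 2 / 2 * ‖x‖ ^ 2) := by
        refine Finset.sum_le_sum fun is _ => ?_
        refine mul_le_mul_of_nonneg_left ?_ (Finset.prod_nonneg fun j _ => p_nonneg A _)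
        have hg := geom_bound A hn hA (m - 1 - k.val) (applySeq A k.val is x)
        rwa [norm_applySeq] at hg
    _ = frobSq A * opNorm A⁻¹ ^ 2 / 2 * ‖x‖ ^ 2 := by
        rw [← Finset.sum_mul, weight_sum A hF, one_mul]
end KX

/-- `E‖Σ_{k=1}^m y_k‖² ≤ m·‖x‖²·(1 + ‖A‖_F²·‖A⁻¹‖²)` where `y₁ = x` and
`y_{k+1} = R_{i_k} y_k` for random indices `i₁, …, i_{m−1}`: the expectation is the sum over
all index sequences in `{1,…,n}^{m−1}` weighted by `∏_j ‖a_{i_j}‖²/‖A‖_F²`, and `y_k` is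
`applySeq A (k−1)` applied along the first `k−1` indices. -/
theorem expected_norm_sq_sum_le {n : ℕ} (hn : 2 ≤ n) (A : Matrix (Fin n) (Fin n) ℝ)
    (hA : IsUnit A) (x : EuclideanSpace ℝ (Fin n)) (m : ℕ) (hm : 1 ≤ m) :
    ∑ is : Fin (m - 1) → Fin n, (∏ j, ‖row A (is j)‖ ^ 2 / frobSq A) *
        ‖∑ k : Fin m,
            applySeq A k.val (fun j => is (Fin.castLE (by have := k.isLt; omega) j)) x‖ ^ 2
      ≤ (m : ℝ) * ‖x‖ ^ 2 * (1 + frobSq A * opNorm A⁻¹ ^ 2) := by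
  classical
  have hn0 : 0 < n := by omega
  have hF : 0 < frobSq A := KX.frobSq_pos A hn0 hA
  have expand : ∀ is : Fin (m-1) → Fin n,
      (∏ j, ‖row A (is j)‖ ^ 2 / frobSq A) *
        ‖∑ k : Fin m,
            applySeq A k.val (fun j => is (Fin.castLE (by have := k.isLt; omega) j)) x‖ ^ 2
      = ∑ k : Fin m, ∑ l : Fin m, (∏ j, KX.p A (is j)) *
          ⟪applySeq A k.val (fun j => is (Fin.castLE (by have := k.isLt; omega) j)) x,
           applySeq A l.val (fun j => is (Fin.castLE (by have := l.isLt; omega) j)) x⟫ := by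
    intro is
    rw [← real_inner_self_eq_norm_sq, sum_inner]
    rw [Finset.mul_sum]
    refine Finset.sum_congr rfl fun k _ => ?_
    rw [inner_sum, Finset.mul_sum]
    rfl
  rw [Finset.sum_congr rfl fun is _ => expand is]
  rw [Finset.sum_comm]
  have swap2 : ∀ k : Fin m,
      (∑ is : Fin (m-1) → Fin n, ∑ l : Fin m, (∏ j, KX.p A (is j)) *
          ⟪applySeq A k.val (fun j => is (Fin.castLE (by have := k.isLt; omega) j)) x,
           applySeq A l.val (fun j => is (Fin.castLE (by have := l.isLt; omega) j)) x⟫)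
      = ∑ l : Fin m, KX.Cc A x m k l := fun k => Finset.sum_comm
  rw [Finset.sum_congr rfl fun k _ => swap2 k]
  have decomp : ∀ k : Fin m, ∑ l : Fin m, KX.Cc A x m k l
      = KX.Cc A x m k k
        + ∑ l ∈ univ.filter (fun l => l < k), KX.Cc A x m k l
        + ∑ l ∈ univ.filter (fun l => k < l), KX.Cc A x m k l := by
    intro k
    have hsplit : ∀ l : Fin m, KX.Cc A x m k l
        = (if l = k then KX.Cc A x m k k else 0)
          + (if l < k then KX.Cc A x m k l else 0)
          + (if k < l then KX.Cc A x m k l else 0) := by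
      intro l
      rcases lt_trichotomy l k with h | h | h
      · rw [if_neg (ne_of_lt h), if_pos h, if_neg (asymm h)]; ring
      · subst h; simp
      · rw [if_neg (ne_of_gt h), if_neg (asymm h), if_pos h]; ring
    rw [Finset.sum_congr rfl fun l _ => hsplit l]
    rw [Finset.sum_add_distrib, Finset.sum_add_distrib]
    congr 1
    · congr 1
      · rw [Finset.sum_ite_eq' univ k (fun _ => KX.Cc A x m k k), if_pos (Finset.mem_univ k)]
      · rw [← Finset.sum_filter]
    · rw [← Finset.sum_filter]
  rw [Finset.sum_congr rfl fun k _ => decomp k]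
  -- symmetry: lower triangle equals upper triangle
  have hlow : ∑ k : Fin m, ∑ l ∈ univ.filter (fun l => l < k), KX.Cc A x m k l
      = ∑ k : Fin m, ∑ l ∈ univ.filter (fun l => k < l), KX.Cc A x m k l := by
    calc ∑ k : Fin m, ∑ l ∈ univ.filter (fun l => l < k), KX.Cc A x m k l
        = ∑ k : Fin m, ∑ l : Fin m, (if l < k then KX.Cc A x m k l else 0) := by
          exact Finset.sum_congr rfl fun k _ => Finset.sum_filter _ _
      _ = ∑ l : Fin m, ∑ k : Fin m, (if l < k then KX.Cc A x m k l else 0) :=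
          Finset.sum_comm
      _ = ∑ l : Fin m, ∑ k ∈ univ.filter (fun k => l < k), KX.Cc A x m k l := by
          exact Finset.sum_congr rfl fun l _ => (Finset.sum_filter _ _).symm
      _ = ∑ k : Fin m, ∑ l ∈ univ.filter (fun l => k < l), KX.Cc A x m k l := by
          refine Finset.sum_congr rfl fun k _ => Finset.sum_congr rfl fun l _ => ?_
          exact KX.Cc_symm A x m l k
  rw [Finset.sum_add_distrib, Finset.sum_add_distrib, hlow]
  have hdiag : ∑ k : Fin m, KX.Cc A x m k k = (m : ℝ) * ‖x‖ ^ 2 := by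
    rw [Finset.sum_congr rfl fun k _ => KX.Cc_diag A hF x m k]
    rw [Finset.sum_const, Finset.card_univ, Fintype.card_fin, nsmul_eq_mul]
  rw [hdiag]
  have hub : ∑ k : Fin m, ∑ l ∈ univ.filter (fun l => k < l), KX.Cc A x m k l
      ≤ (m : ℝ) * (frobSq A * opNorm A⁻¹ ^ 2 / 2 * ‖x‖ ^ 2) := by
    calc ∑ k : Fin m, ∑ l ∈ univ.filter (fun l => k < l), KX.Cc A x m k l
        ≤ ∑ k : Fin m, frobSq A * opNorm A⁻¹ ^ 2 / 2 * ‖x‖ ^ 2 :=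
          Finset.sum_le_sum fun k _ => KX.cross_sum_bound A hn0 hA x m k
      _ = (m : ℝ) * (frobSq A * opNorm A⁻¹ ^ 2 / 2 * ‖x‖ ^ 2) := by
          rw [Finset.sum_const, Finset.card_univ, Fintype.card_fin, nsmul_eq_mul]
  have hx : (0:ℝ) ≤ ‖x‖ ^ 2 := by positivity
  nlinarith [hub]
end
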